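/- arXiv:2501.02714 — 14 statements merged into one kernel-verified Lean document; each statement's English description precedes it below -/
import Mathlib

section
/- Let X and Y be real normed linear spaces with dim X > 2, and let x ∈ X be nonzero. Then for any bounded linear operator T : X → Y, there exists a subspace V of X with V ⊆ x^⊥_B (i.e., x is Birkhoff-James orthogonal to every element of V) of codimension 2 in X such that Tx is Birkhoff-James orthogonal to Tz for all z ∈ V. -/
/-!
A norming functional `f` of `x` (`‖f‖ ≤ 1`, `f x = ‖x‖`) witnesses `x ⊥_B v` for every `v` in its
kernel, and a norming functional `g` of `T x` witnesses `T x ⊥_B T z` whenever `g (T z) = 0`. So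
it suffices to find a subspace of codimension 2 on which both `f` and `g ∘ T` vanish: enlarge
their span to a 2-dimensional subspace `W` of the algebraic dual (possible since
`dim X ≤ dim X*`) and take its common kernel, whose codimension is `dim W`.
-/

/-- Birkhoff-James orthogonality: `x ⊥_B y` iff `‖x + t • y‖ ≥ ‖x‖` for all real `t`. -/
def BJOrth {X : Type*} [NormedAddCommGroup X] [NormedSpace ℝ X] (x y : X) : Prop :=
  ∀ t : ℝ, ‖x‖ ≤ ‖x + t • y‖

open Module

theorem BJOrth.of_dual_vector {X : Type*} [NormedAddCommGroup X] [NormedSpace ℝ X] {x y : X}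
    {g : StrongDual ℝ X} (hg : ‖g‖ ≤ 1) (hgx : g x = ‖x‖) (hgy : g y = 0) : BJOrth x y :=
  fun t ↦ calc
    ‖x‖ = g (x + t • y) := by simp [hgx, hgy]
    _ ≤ ‖g (x + t • y)‖ := Real.le_norm_self _
    _ ≤ 1 * ‖x + t • y‖ := g.le_of_opNorm_le hg _
    _ = ‖x + t • y‖ := one_mul _

theorem Submodule.exists_le_finrank_eq {K M : Type*} [DivisionRing K] [AddCommGroup M]
    [Module K M] (S : Submodule K M) [FiniteDimensional K S] {n : ℕ}
    (hS : finrank K S ≤ n) (hn : n ≤ Module.rank K M) :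
    ∃ W : Submodule K M, S ≤ W ∧ FiniteDimensional K W ∧ finrank K W = n := by
  induction n with
  | zero => exact ⟨S, le_rfl, inferInstance, Nat.le_zero.mp hS⟩
  | succ n ih =>
    rcases hS.eq_or_lt with hS | hS
    · exact ⟨S, le_rfl, inferInstance, hS⟩
    obtain ⟨W, hSW, hW, rfl⟩ :=
      ih (Nat.lt_succ_iff.mp hS) ((Nat.cast_le.mpr n.le_succ).trans hn)
    obtain ⟨v, hv⟩ : ∃ v, v ∉ W := by
      by_contra! h
      rw [← rank_top, ← eq_top_iff.mpr fun v _ ↦ h v, ← finrank_eq_rank] at hn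
      exact absurd (Nat.cast_le.mp hn) (Nat.not_succ_le_self _)
    refine ⟨W ⊔ span K {v}, hSW.trans le_sup_left, inferInstance, ?_⟩
    have := finrank_sup_add_finrank_inf_eq W (span K {v})
    rw [disjoint_iff.mp (disjoint_span_singleton_of_notMem hv), finrank_bot,
      finrank_span_singleton (ne_of_mem_of_not_mem W.zero_mem hv).symm] at this
    omega

section Dual

variable {K V : Type*} [Field K] [AddCommGroup V] [Module K V]

theorem Subspace.finrank_quotient_dualCoannihilator (W : Subspace K (Dual K V))
    [FiniteDimensional K W] : finrank K (V ⧸ W.dualCoannihilator) = finrank K W :=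
  (LinearEquiv.ofBijective _ W.quotDualCoannihilatorToDual_bijective).finrank_eq.trans
    (Subspace.dual_finrank_eq (K := K) (V := W))

theorem exists_finrank_quotient_eq_of_card_le (s : Finset (Dual K V)) {n : ℕ} (hs : s.card ≤ n)
    (hn : n ≤ Module.rank K V) :
    ∃ U : Subspace K V, (∀ φ ∈ s, ∀ v ∈ U, φ v = 0) ∧ finrank K (V ⧸ U) = n := by
  classical
  have hn' : n ≤ Module.rank K (Dual K V) := by
    simpa using (Cardinal.lift_le.mpr hn).trans
      (LinearMap.lift_rank_le_of_injective _ (Basis.ofVectorSpace K V).toDual_injective)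
  obtain ⟨W, hsW, hW, rfl⟩ := (Submodule.span K (s : Set (Dual K V))).exists_le_finrank_eq
    ((finrank_span_finset_le_card s).trans hs) hn'
  refine ⟨W.dualCoannihilator, fun φ hφ v hv ↦ ?_, Subspace.finrank_quotient_dualCoannihilator W⟩
  exact (Submodule.mem_dualCoannihilator v).mp hv φ (hsW (Submodule.subset_span hφ))

end Dual

theorem stmt_0_general {X Y : Type*} [NormedAddCommGroup X] [NormedSpace ℝ X]
    [NormedAddCommGroup Y] [NormedSpace ℝ Y]
    (hdim : 2 < Module.rank ℝ X) (x : X) (T : X →L[ℝ] Y) :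
    ∃ V : Submodule ℝ X, (∀ v ∈ V, BJOrth x v) ∧
      Module.finrank ℝ (X ⧸ V) = 2 ∧
      ∀ z ∈ V, BJOrth (T x) (T z) := by
  obtain ⟨f, hf, hfx⟩ := exists_dual_vector'' ℝ x
  obtain ⟨g, hg, hgTx⟩ := exists_dual_vector'' ℝ (T x)
  classical
  obtain ⟨V, hV, hcodim⟩ := exists_finrank_quotient_eq_of_card_le
    {(f : Dual ℝ X), ((g ∘L T : StrongDual ℝ X) : Dual ℝ X)} Finset.card_le_two
    (by exact_mod_cast hdim.le)
  refine ⟨V, fun v hv ↦ ?_, hcodim, fun z hz ↦ ?_⟩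
  · exact .of_dual_vector hf hfx (hV _ (Finset.mem_insert_self _ _) v hv)
  · exact .of_dual_vector hg hgTx
      (hV _ (Finset.mem_insert_of_mem (Finset.mem_singleton_self _)) z hz)

theorem stmt_0 {X Y : Type*} [NormedAddCommGroup X] [NormedSpace ℝ X]
    [NormedAddCommGroup Y] [NormedSpace ℝ Y]
    (hdim : 2 < Module.rank ℝ X) (x : X) (hx : x ≠ 0) (T : X →L[ℝ] Y) :
    ∃ V : Submodule ℝ X, (∀ v ∈ V, BJOrth x v) ∧
      Module.finrank ℝ (X ⧸ V) = 2 ∧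
      ∀ z ∈ V, BJOrth (T x) (T z) :=
  stmt_0_general hdim x T
end

section
/- Let X be a real normed linear space and x ∈ X nonzero. Then y ∈ x^⊥_B if and only if y lies in some associated cone of x, i.e., x^⊥_B equals the union over pairs (f_i, f_j) of extreme support functionals at x of the sets V_{ij} = {y ∈ X : f_i(y) ≥ 0 and f_j(y) ≤ 0}. -/
/-- The set of support functionals at `x`. -/
def suppFun {X : Type*} [NormedAddCommGroup X] [NormedSpace ℝ X] (x : X) :
    Set (X →L[ℝ] ℝ) := {f | ‖f‖ = 1 ∧ f x = ‖x‖}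

section
variable {E : Type*} [AddCommGroup E] [Module ℝ E] [TopologicalSpace E] [T2Space E]
  [IsTopologicalAddGroup E] [ContinuousSMul ℝ E] [LocallyConvexSpace ℝ E]

lemma IsCompact.exists_mem_extremePoints_isMaxOn {s : Set E} (hs : IsCompact s)
    (hne : s.Nonempty) (l : StrongDual ℝ E) : ∃ e ∈ s.extremePoints ℝ, IsMaxOn l s e := by
  obtain ⟨z, hzs, hz⟩ := hs.exists_isMaxOn hne l.continuous.continuousOn
  have h : IsExposed ℝ s {y ∈ s | ∀ w ∈ s, l w ≤ l y} := fun _ => ⟨l, rfl⟩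
  obtain ⟨e, he⟩ := (h.isCompact hs).extremePoints_nonempty ⟨z, hzs, hz⟩
  exact ⟨e, h.isExtreme.extremePoints_subset_extremePoints he, (extremePoints_subset he).2⟩

end

section
variable {X : Type*} [NormedAddCommGroup X] [NormedSpace ℝ X]
open WeakDual Metric

lemma mem_suppFun_of_norm_le_one {x : X} (hx : x ≠ 0) {f : X →L[ℝ] ℝ} (hf : ‖f‖ ≤ 1)
    (hfx : f x = ‖x‖) : f ∈ suppFun x := by
  refine ⟨le_antisymm hf ?_, hfx⟩
  have := f.le_opNorm x
  rw [hfx, Real.norm_of_nonneg (norm_nonneg x)] at this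
  exact one_le_of_le_mul_right₀ (norm_pos_iff.mpr hx) this

lemma norm_add_mul_apply_le_of_mem_suppFun {x : X} {f : X →L[ℝ] ℝ} (hf : f ∈ suppFun x)
    (y : X) (t : ℝ) : ‖x‖ + t * f y ≤ ‖x + t • y‖ :=
  calc ‖x‖ + t * f y = f (x + t • y) := by simp [hf.2]
    _ ≤ ‖f‖ * ‖x + t • y‖ := (le_abs_self _).trans (f.le_opNorm _)
    _ = ‖x + t • y‖ := by rw [hf.1, one_mul]

lemma BJOrth.of_mem_suppFun {x y : X} {f g : X →L[ℝ] ℝ} (hf : f ∈ suppFun x)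
    (hg : g ∈ suppFun x) (hfy : 0 ≤ f y) (hgy : g y ≤ 0) : BJOrth x y := by
  intro t
  rcases le_total 0 t with ht | ht
  · linarith [norm_add_mul_apply_le_of_mem_suppFun hf y t, mul_nonneg ht hfy]
  · linarith [norm_add_mul_apply_le_of_mem_suppFun hg y t,
      mul_nonneg_of_nonpos_of_nonpos ht hgy]

lemma BJOrth.norm_mk_span_singleton {x y : X} (h : BJOrth x y) :
    ‖(Submodule.Quotient.mk x : X ⧸ ℝ ∙ y)‖ = ‖x‖ := by
  refine le_antisymm (Submodule.Quotient.norm_mk_le _ x) ?_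
  refine le_of_forall_pos_lt_add fun ε hε => ?_
  obtain ⟨m, hm, hmε⟩ := Submodule.Quotient.norm_mk_lt (Submodule.Quotient.mk x : X ⧸ ℝ ∙ y) hε
  obtain ⟨t, ht⟩ := Submodule.mem_span_singleton.mp ((Submodule.Quotient.eq _).mp hm)
  calc ‖x‖ ≤ ‖x + t • y‖ := h t
    _ = ‖m‖ := by rw [ht]; abel_nf
    _ < _ := hmε

lemma BJOrth.exists_mem_suppFun_apply_eq_zero {x y : X} (hx : x ≠ 0) (h : BJOrth x y) :
    ∃ f ∈ suppFun x, f y = 0 := by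
  obtain ⟨g, hg, hgx⟩ := exists_dual_vector'' ℝ (Submodule.Quotient.mk x : X ⧸ ℝ ∙ y)
  let f := g.comp (ℝ ∙ y).mkQL
  have hf : ‖f‖ ≤ 1 := by
    refine f.opNorm_le_bound zero_le_one fun z => ?_
    calc ‖f z‖ ≤ ‖g‖ * ‖(Submodule.Quotient.mk z : X ⧸ ℝ ∙ y)‖ := g.le_opNorm _
      _ ≤ 1 * ‖z‖ := mul_le_mul hg (Submodule.Quotient.norm_mk_le _ z) (norm_nonneg _) zero_le_one
  refine ⟨f, mem_suppFun_of_norm_le_one hx hf ?_, ?_⟩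
  · simpa [f, h.norm_mk_span_singleton] using hgx
  · simp [f, (Submodule.Quotient.mk_eq_zero _).mpr (Submodule.mem_span_singleton_self y)]

lemma isCompact_preimage_suppFun {x : X} (hx : x ≠ 0) :
    IsCompact (toStrongDual ⁻¹' suppFun x : Set (WeakDual ℝ X)) := by
  have : toStrongDual ⁻¹' suppFun x =
      toStrongDual ⁻¹' closedBall 0 1 ∩ {f : WeakDual ℝ X | f x = ‖x‖} := by
    ext f
    simp only [Set.mem_preimage, Set.mem_inter_iff, mem_closedBall_zero_iff, Set.mem_ofPred_eq]
    exact ⟨fun hf => ⟨hf.1.le, hf.2⟩, fun hf => mem_suppFun_of_norm_le_one hx hf.1 hf.2⟩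
  rw [this]
  exact (WeakDual.isCompact_closedBall 0 1).inter_right
    (isClosed_eq (eval_continuous x) continuous_const)

lemma exists_mem_extremePoints_suppFun_forall_le {x : X} (hx : x ≠ 0) (y : X) :
    ∃ f ∈ (suppFun x).extremePoints ℝ, ∀ g ∈ suppFun x, g y ≤ f y := by
  -- Mathlib registers local convexity only for `WeakBilin`, not for `WeakDual`.
  have : LocallyConvexSpace ℝ (WeakDual ℝ X) := WeakBilin.locallyConvexSpace
  obtain ⟨f₀, hf₀⟩ := exists_dual_vector ℝ x (norm_ne_zero_iff.mpr hx)
  have hne : (toStrongDual ⁻¹' suppFun x : Set (WeakDual ℝ X)).Nonempty :=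
    ⟨StrongDual.toWeakDual f₀, hf₀⟩
  -- Supplying the functional separately keeps its `WeakBilin` module instance out of unification.
  have hext := (isCompact_preimage_suppFun hx).exists_mem_extremePoints_isMaxOn hne
  obtain ⟨f, hf, hmax⟩ := hext (WeakBilin.eval (topDualPairing ℝ X) y)
  exact ⟨toStrongDual f, hf, fun g hg => hmax (a := StrongDual.toWeakDual g) hg⟩

end

theorem stmt_1 {X : Type*} [NormedAddCommGroup X] [NormedSpace ℝ X]
    (x : X) (hx : x ≠ 0) :
    {y : X | BJOrth x y} =
      ⋃ f ∈ Set.extremePoints ℝ (suppFun x), ⋃ g ∈ Set.extremePoints ℝ (suppFun x),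
        {y : X | 0 ≤ f y ∧ g y ≤ 0} := by
  ext y
  simp only [Set.mem_ofPred_eq, Set.mem_iUnion]
  constructor
  · intro h
    obtain ⟨f₀, hf₀, hf₀y⟩ := h.exists_mem_suppFun_apply_eq_zero hx
    obtain ⟨f, hf, hfmax⟩ := exists_mem_extremePoints_suppFun_forall_le hx y
    obtain ⟨g, hg, hgmax⟩ := exists_mem_extremePoints_suppFun_forall_le hx (-y)
    refine ⟨f, hf, g, hg, hf₀y ▸ hfmax f₀ hf₀, ?_⟩
    simpa [hf₀y] using hgmax f₀ hf₀
  · rintro ⟨f, hf, g, hg, hfy, hgy⟩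
    exact .of_mem_suppFun (extremePoints_subset hf) (extremePoints_subset hg) hfy hgy
end

section
/- Let X be a real normed linear space and let x ∈ X be nonzero. Then x⁺ \ x⁻ = (⋃_{f ∈ J(x)} {z : f(z) > 0}) ∩ (x^⊥_B)^c, and x⁻ \ x⁺ = (⋃_{f ∈ J(x)} {z : f(z) < 0}) ∩ (x^⊥_B)^c. -/
/-- `y ∈ x⁺`. -/
def BJPlus {X : Type*} [NormedAddCommGroup X] [NormedSpace ℝ X] (x : X) : Set X :=
  {y | ∀ t : ℝ, 0 ≤ t → ‖x‖ ≤ ‖x + t • y‖}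

/-- `y ∈ x⁻`. -/
def BJMinus {X : Type*} [NormedAddCommGroup X] [NormedSpace ℝ X] (x : X) : Set X :=
  {y | ∀ t : ℝ, t ≤ 0 → ‖x‖ ≤ ‖x + t • y‖}

/-!
A support functional `f ∈ J(x)` satisfies `‖x + t • y‖ ≥ f (x + t • y) = ‖x‖ + t f(y)`, so `f y ≥ 0`
puts `y` in `x⁺`. Conversely, if `y ∈ x⁺` the segment from `x` to `x + y` misses the open ball of
radius `‖x‖`; a separating functional, normalised, lies in `J(x)` and is nonnegative at `y`.
Since `x ⊥_B y` means `y ∈ x⁺ ∩ x⁻`, the two set identities follow, `x⁻` being `-x⁺`.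
-/

open Metric

section

variable {X : Type*} [NormedAddCommGroup X] [NormedSpace ℝ X]

lemma ContinuousLinearMap.opNorm_mul_le_of_forall_ball_lt {f : X →L[ℝ] ℝ} {r u : ℝ} (hr : 0 < r)
    (h : ∀ a ∈ ball (0 : X) r, f a < u) : ‖f‖ * r ≤ u := by
  by_contra! hlt
  obtain ⟨z, hz, hfz⟩ := f.exists_lt_apply_of_lt_opNorm ((div_lt_iff₀ hr).2 hlt)
  have hrz : r • z ∈ ball (0 : X) r := by
    rw [mem_ball_zero_iff, norm_smul, Real.norm_of_nonneg hr.le]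
    exact mul_lt_of_lt_one_right hr hz
  have hrz' : -(r • z) ∈ ball (0 : X) r := by rwa [mem_ball_zero_iff, norm_neg, ← mem_ball_zero_iff]
  have habs : |f (r • z)| < u :=
    abs_lt.2 ⟨by linarith [map_neg f (r • z), h _ hrz'], h _ hrz⟩
  rw [map_smul, smul_eq_mul, abs_mul, abs_of_pos hr, ← Real.norm_eq_abs] at habs
  rw [div_lt_iff₀ hr] at hfz
  linarith

lemma apply_le_norm_of_mem_suppFun {x : X} {f : X →L[ℝ] ℝ} (hf : f ∈ suppFun x) (z : X) :
    f z ≤ ‖z‖ :=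
  (le_abs_self _).trans (by simpa [hf.1] using f.le_opNorm z)

lemma inv_norm_smul_mem_suppFun {x : X} {f : X →L[ℝ] ℝ} (hf : f ≠ 0) (hfx : f x = ‖f‖ * ‖x‖) :
    ‖f‖⁻¹ • f ∈ suppFun x := by
  have hf' : ‖f‖ ≠ 0 := norm_ne_zero_iff.2 hf
  refine ⟨?_, ?_⟩
  · rw [norm_smul, norm_inv, norm_norm, inv_mul_cancel₀ hf']
  · rw [smul_apply, hfx, smul_eq_mul, inv_mul_cancel_left₀ hf']

lemma mem_bjPlus_of_mem_suppFun {x y : X} {f : X →L[ℝ] ℝ} (hf : f ∈ suppFun x) (hfy : 0 ≤ f y) :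
    y ∈ BJPlus x := fun t ht =>
  calc ‖x‖ = f x := hf.2.symm
    _ ≤ f x + t * f y := le_add_of_nonneg_right (mul_nonneg ht hfy)
    _ = f (x + t • y) := by rw [map_add, map_smul, smul_eq_mul]
    _ ≤ ‖x + t • y‖ := apply_le_norm_of_mem_suppFun hf _

lemma exists_mem_suppFun_nonneg_of_mem_bjPlus {x y : X} (hx : x ≠ 0) (hy : y ∈ BJPlus x) :
    ∃ f ∈ suppFun x, 0 ≤ f y := by
  have hx' : 0 < ‖x‖ := norm_pos_iff.2 hx
  have hdisj : Disjoint (ball (0 : X) ‖x‖) (segment ℝ x (x + y)) := by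
    rw [Set.disjoint_left, segment_eq_image']
    rintro - ha ⟨t, ht, rfl⟩
    rw [mem_ball_zero_iff, add_sub_cancel_left] at ha
    exact (hy t ht.1).not_gt ha
  obtain ⟨f, u, hball, hseg⟩ :=
    geometric_hahn_banach_open (convex_ball 0 _) isOpen_ball (convex_segment _ _) hdisj
  have hnorm : ‖f‖ * ‖x‖ ≤ u := f.opNorm_mul_le_of_forall_ball_lt hx' hball
  have hux : u ≤ f x := hseg x (left_mem_segment ℝ _ _)
  have huxy : u ≤ f (x + y) := hseg _ (right_mem_segment ℝ _ _)
  have hfx : f x ≤ ‖f‖ * ‖x‖ := (le_abs_self _).trans (f.le_opNorm x)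
  have hu : 0 < u := by simpa using hball 0 (mem_ball_self hx')
  have hf : f ≠ 0 := by
    rintro rfl
    simp only [zero_apply] at hux
    linarith
  have hfy : 0 ≤ f y := by
    rw [map_add] at huxy
    linarith
  exact ⟨‖f‖⁻¹ • f, inv_norm_smul_mem_suppFun hf (by linarith),
    smul_nonneg (inv_nonneg.2 (norm_nonneg f)) hfy⟩

theorem mem_bjPlus_iff {x y : X} (hx : x ≠ 0) : y ∈ BJPlus x ↔ ∃ f ∈ suppFun x, 0 ≤ f y :=
  ⟨exists_mem_suppFun_nonneg_of_mem_bjPlus hx, fun ⟨_, hf, hfy⟩ => mem_bjPlus_of_mem_suppFun hf hfy⟩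

lemma neg_mem_bjPlus_iff {x y : X} : -y ∈ BJPlus x ↔ y ∈ BJMinus x := by
  refine ⟨fun h t ht => ?_, fun h t ht => ?_⟩
  · simpa using h (-t) (neg_nonneg.2 ht)
  · simpa using h (-t) (neg_nonpos.2 ht)

theorem mem_bjMinus_iff {x y : X} (hx : x ≠ 0) : y ∈ BJMinus x ↔ ∃ f ∈ suppFun x, f y ≤ 0 := by
  simp only [← neg_mem_bjPlus_iff, mem_bjPlus_iff hx, map_neg, neg_nonneg]

lemma bjOrth_iff {x y : X} : BJOrth x y ↔ y ∈ BJPlus x ∧ y ∈ BJMinus x := by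
  refine ⟨fun h => ⟨fun t _ => h t, fun t _ => h t⟩, fun ⟨hp, hm⟩ t => ?_⟩
  rcases le_total 0 t with ht | ht
  exacts [hp t ht, hm t ht]

theorem bjPlus_diff_bjMinus {x : X} (hx : x ≠ 0) :
    BJPlus x \ BJMinus x = (⋃ f ∈ suppFun x, {z : X | 0 < f z}) ∩ {y : X | BJOrth x y}ᶜ := by
  ext y
  simp only [Set.mem_sdiff, Set.mem_inter_iff, Set.mem_iUnion, Set.mem_compl_iff, Set.mem_ofPred_eq,
    bjOrth_iff, exists_prop]
  constructor
  · rintro ⟨hp, hm⟩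
    obtain ⟨f, hf, hfy⟩ := (mem_bjPlus_iff hx).1 hp
    refine ⟨⟨f, hf, hfy.lt_of_ne fun h => hm ((mem_bjMinus_iff hx).2 ⟨f, hf, h.ge⟩)⟩, ?_⟩
    exact fun h => hm h.2
  · rintro ⟨⟨f, hf, hfy⟩, horth⟩
    have hp := mem_bjPlus_of_mem_suppFun hf hfy.le
    exact ⟨hp, fun hm => horth ⟨hp, hm⟩⟩

theorem bjMinus_diff_bjPlus {x : X} (hx : x ≠ 0) :
    BJMinus x \ BJPlus x = (⋃ f ∈ suppFun x, {z : X | f z < 0}) ∩ {y : X | BJOrth x y}ᶜ := by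
  ext y
  simp only [Set.mem_sdiff, Set.mem_inter_iff, Set.mem_iUnion, Set.mem_compl_iff, Set.mem_ofPred_eq,
    bjOrth_iff, exists_prop]
  constructor
  · rintro ⟨hm, hp⟩
    obtain ⟨f, hf, hfy⟩ := (mem_bjMinus_iff hx).1 hm
    refine ⟨⟨f, hf, hfy.lt_of_ne fun h => hp ((mem_bjPlus_iff hx).2 ⟨f, hf, h.ge⟩)⟩, ?_⟩
    exact fun h => hp h.1
  · rintro ⟨⟨f, hf, hfy⟩, horth⟩
    have hm := (mem_bjMinus_iff hx).2 ⟨f, hf, hfy.le⟩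
    exact ⟨hm, fun hp => horth ⟨hp, hm⟩⟩

end

theorem stmt_3 {X : Type*} [NormedAddCommGroup X] [NormedSpace ℝ X]
    (x : X) (hx : x ≠ 0) :
    BJPlus x \ BJMinus x =
      (⋃ f ∈ suppFun x, {z : X | 0 < f z}) ∩ {y : X | BJOrth x y}ᶜ ∧
    BJMinus x \ BJPlus x =
      (⋃ f ∈ suppFun x, {z : X | f z < 0}) ∩ {y : X | BJOrth x y}ᶜ :=
  ⟨bjPlus_diff_bjMinus hx, bjMinus_diff_bjPlus hx⟩
end

section
/- Let X be a real normed linear space with dim X > 2. Then for each x ∈ X, the set x^⊥_B \ {0} is path connected (in particular connected). -/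
namespace LinearMap

variable {K V : Type*} [DivisionRing K] [AddCommGroup V] [Module K V]

theorem rank_le_rank_ker_add_one (f : V →ₗ[K] K) : Module.rank K V ≤ Module.rank K (ker f) + 1 := by
  have hrange : Module.rank K (range f) ≤ 1 := (Submodule.rank_le _).trans_eq (Module.rank_self K)
  rw [← Cardinal.lift_le, Cardinal.lift_add, Cardinal.lift_one, ← f.lift_rank_range_add_rank_ker,
    add_comm]
  gcongr
  exact Cardinal.lift_le_one_iff.2 hrange

theorem one_lt_rank_ker (f : V →ₗ[K] K) (h : 2 < Module.rank K V) : 1 < Module.rank K (ker f) := by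
  by_contra! hker
  have := f.rank_le_rank_ker_add_one.trans (add_le_add_left hker 1)
  rw [one_add_one_eq_two] at this
  exact this.not_gt h

theorem ker_inf_ker_ne_bot (f g : V →ₗ[K] K) (h : 2 < Module.rank K V) : ker f ⊓ ker g ≠ ⊥ := by
  have hker : 0 < Module.rank K (ker (g ∘ₗ (ker f).subtype)) := by
    by_contra! h0
    have := (g ∘ₗ (ker f).subtype).rank_le_rank_ker_add_one
    rw [nonpos_iff_eq_zero.1 h0, zero_add] at this
    exact this.not_gt (f.one_lt_rank_ker h)
  obtain ⟨⟨⟨z, hzf⟩, hzg⟩, hz0⟩ := rank_pos_iff_exists_ne_zero.1 hker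
  exact (Submodule.ne_bot_iff _).2 ⟨z, ⟨hzf, hzg⟩, by simpa using hz0⟩

end LinearMap

theorem Submodule.isPathConnected_diff_zero {E : Type*} [AddCommGroup E] [Module ℝ E]
    [TopologicalSpace E] [IsTopologicalAddGroup E] [ContinuousSMul ℝ E]
    (p : Submodule ℝ E) (hp : 1 < Module.rank ℝ p) : IsPathConnected ((p : Set E) \ {0}) := by
  convert (isPathConnected_compl_singleton_of_one_lt_rank hp 0).image continuous_subtype_val
  ext
  simp [and_comm]

theorem IsPathConnected.biUnion_of_pairwise_inter_nonempty {α ι : Type*} [TopologicalSpace α]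
    {t : Set ι} {s : ι → Set α} (ht : t.Nonempty) (hs : ∀ i ∈ t, IsPathConnected (s i))
    (hst : ∀ i ∈ t, ∀ j ∈ t, (s i ∩ s j).Nonempty) : IsPathConnected (⋃ i ∈ t, s i) := by
  obtain ⟨i₀, hi₀⟩ := ht
  refine isPathConnected_iff.2 ⟨(hs i₀ hi₀).nonempty.mono (Set.subset_biUnion_of_mem hi₀), ?_⟩
  simp only [Set.mem_iUnion₂]
  rintro x ⟨i, hi, hx⟩ y ⟨j, hj, hy⟩
  obtain ⟨z, hzi, hzj⟩ := hst i hi j hj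
  exact (((hs i hi).joinedIn x hx z hzi).mono (Set.subset_biUnion_of_mem hi)).trans
    (((hs j hj).joinedIn z hzj y hy).mono (Set.subset_biUnion_of_mem hj))

section SupportFunctionals

variable {X : Type*}

/-- `J(x)`, relaxed to `‖f‖ ≤ 1`: for `x ≠ 0` nothing changes, and for `x = 0` it still describes
`0^⊥_B = X` as a union of kernels. -/
def supportFunctionals [SeminormedAddCommGroup X] [NormedSpace ℝ X] (x : X) :
    Set (StrongDual ℝ X) :=
  {f | ‖f‖ ≤ 1 ∧ f x = ‖x‖}

theorem exists_mem_supportFunctionals_le_ker [SeminormedAddCommGroup X] [NormedSpace ℝ X]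
    {x : X} {S : Submodule ℝ X} (hS : ∀ s ∈ S, ‖x‖ ≤ ‖x + s‖) :
    ∃ f ∈ supportFunctionals x, S ≤ f.ker := by
  -- Hahn–Banach in `X ⧸ S`, where the hypothesis says that `x` keeps its norm.
  have hmkQ : ‖S.mkQL‖ ≤ 1 :=
    ContinuousLinearMap.opNorm_le_bound _ zero_le_one fun m ↦ by
      simpa using Submodule.Quotient.norm_mk_le S m
  have hx : ‖S.mkQL x‖ = ‖x‖ := by
    refine le_antisymm (Submodule.Quotient.norm_mk_le S x) ?_
    refine QuotientAddGroup.le_norm_iff.2 fun m hm ↦ ?_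
    simpa using hS _ ((Submodule.Quotient.eq S).1 hm)
  obtain ⟨g, hg, hgx⟩ := exists_dual_vector'' ℝ (S.mkQL x)
  refine ⟨g ∘L S.mkQL, ⟨?_, ?_⟩, fun s hs ↦ ?_⟩
  · exact (g.opNorm_comp_le _).trans (mul_le_one₀ hg (norm_nonneg _) hmkQ)
  · rw [ContinuousLinearMap.comp_apply, hgx, hx]
    rfl
  · simp [(Submodule.Quotient.mk_eq_zero S).2 hs]

variable [NormedAddCommGroup X] [NormedSpace ℝ X] {x y : X}

theorem bjOrth_iff_exists_mem_supportFunctionals :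
    BJOrth x y ↔ ∃ f ∈ supportFunctionals x, f y = 0 := by
  constructor
  · intro h
    obtain ⟨f, hf, hker⟩ := exists_mem_supportFunctionals_le_ker (S := ℝ ∙ y) fun s hs ↦ by
      obtain ⟨t, rfl⟩ := Submodule.mem_span_singleton.1 hs
      exact h t
    exact ⟨f, hf, hker (Submodule.mem_span_singleton_self y)⟩
  · rintro ⟨f, ⟨hf, hfx⟩, hfy⟩ t
    calc ‖x‖ = f (x + t • y) := by simp [hfx, hfy]
      _ ≤ ‖f (x + t • y)‖ := Real.le_norm_self _
      _ ≤ ‖x + t • y‖ := by simpa using f.le_of_opNorm_le hf (x + t • y)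

theorem setOf_bjOrth_eq_biUnion_ker (x : X) :
    {y | BJOrth x y} = ⋃ f ∈ supportFunctionals x, (f.ker : Set X) := by
  ext y
  simp [bjOrth_iff_exists_mem_supportFunctionals]

end SupportFunctionals

theorem stmt_4 {X : Type*} [NormedAddCommGroup X] [NormedSpace ℝ X]
    (hdim : 2 < Module.rank ℝ X) (x : X) :
    IsPathConnected ({y : X | BJOrth x y} \ {0}) := by
  rw [setOf_bjOrth_eq_biUnion_ker]
  simp only [Set.iUnion_sdiff]
  refine .biUnion_of_pairwise_inter_nonempty (exists_dual_vector'' ℝ x)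
    (fun f _ ↦ f.ker.isPathConnected_diff_zero (f.toLinearMap.one_lt_rank_ker hdim))
    fun f _ g _ ↦ ?_
  obtain ⟨z, ⟨hfz, hgz⟩, hz⟩ :=
    Submodule.exists_mem_ne_zero_of_ne_bot (f.toLinearMap.ker_inf_ker_ne_bot g hdim)
  exact ⟨z, ⟨hfz, hz⟩, hgz, hz⟩
end

section
/- Let X be a two-dimensional real normed linear space, Y any real normed linear space, and x ∈ X nonzero. A bounded linear operator T : X → Y preserves Birkhoff-James orthogonality at x in some direction (i.e., there exists y ∈ x^⊥_B \ {0} with Tx ⊥_B Ty) if and only if there exist u, v ∈ x^⊥_B \ {0} such that Tu ∈ (Tx)⁺, Tv ∈ (Tx)⁻, and (1−α)u + αv ∈ x^⊥_B \ {0} for all α ∈ [0,1]. -/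
/-! The segment `[u, v]` lies in `x^⊥_B`, and `α ↦ T((1 - α) u + α v)` is a continuous path from
`(Tx)⁺` to `(Tx)⁻`. Every vector lies in `(Tx)⁺ ∪ (Tx)⁻` (the norm is convex along lines), and both
sets are closed, so by connectedness of `[0, 1]` the path meets `(Tx)⁺ ∩ (Tx)⁻ = (Tx)^⊥_B`. -/

section BirkhoffJames

variable {E : Type*} [NormedAddCommGroup E] [NormedSpace ℝ E]

theorem bjOrth_iff_mem_bjPlus_and_mem_bjMinus {w z : E} :
    BJOrth w z ↔ z ∈ BJPlus w ∧ z ∈ BJMinus w :=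
  ⟨fun h => ⟨fun t _ => h t, fun t _ => h t⟩,
    fun ⟨hp, hm⟩ t => (le_total 0 t).elim (hp t) (hm t)⟩

theorem convexOn_norm_add_smul (w z : E) : ConvexOn ℝ Set.univ fun t : ℝ => ‖w + t • z‖ := by
  have h := (convexOn_norm (convex_univ : Convex ℝ (Set.univ : Set E))).comp_affineMap
    ((LinearMap.toSpanSingleton ℝ E z).toAffineMap + AffineMap.const ℝ ℝ w)
  simpa [Function.comp_def, add_comm] using h

theorem mem_bjPlus_or_mem_bjMinus (w z : E) : z ∈ BJPlus w ∨ z ∈ BJMinus w := by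
  by_contra! h
  simp only [BJPlus, BJMinus, Set.mem_ofPred_eq, not_forall, not_le] at h
  obtain ⟨⟨t, ht, hlt⟩, ⟨s, hs, hls⟩⟩ := h
  have h0 : (0 : ℝ) ∈ segment ℝ s t := by
    rw [segment_eq_Icc (hs.trans ht)]
    exact ⟨hs, ht⟩
  have := (convexOn_norm_add_smul w z).le_on_segment trivial trivial h0
  simp only [zero_smul, add_zero] at this
  exact (this.trans_lt (max_lt hls hlt)).false

theorem isClosed_bjPlus (w : E) : IsClosed (BJPlus w) := by
  simp only [BJPlus, Set.ofPred_forall]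
  exact isClosed_iInter fun t => isClosed_iInter fun _ =>
    isClosed_le continuous_const (by fun_prop)

theorem isClosed_bjMinus (w : E) : IsClosed (BJMinus w) := by
  simp only [BJMinus, Set.ofPred_forall]
  exact isClosed_iInter fun t => isClosed_iInter fun _ =>
    isClosed_le continuous_const (by fun_prop)

theorem exists_bjOrth_of_path {w : E} {f : ℝ → E} (hf : Continuous f)
    (h0 : f 0 ∈ BJPlus w) (h1 : f 1 ∈ BJMinus w) : ∃ α ∈ Set.Icc (0 : ℝ) 1, BJOrth w (f α) := by
  obtain ⟨α, hα, hp, hm⟩ := isPreconnected_closed_iff.mp isPreconnected_Icc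
    (f ⁻¹' BJPlus w) (f ⁻¹' BJMinus w) ((isClosed_bjPlus w).preimage hf)
    ((isClosed_bjMinus w).preimage hf) (fun α _ => mem_bjPlus_or_mem_bjMinus w (f α))
    ⟨0, Set.left_mem_Icc.mpr zero_le_one, h0⟩ ⟨1, Set.right_mem_Icc.mpr zero_le_one, h1⟩
  exact ⟨α, hα, bjOrth_iff_mem_bjPlus_and_mem_bjMinus.mpr ⟨hp, hm⟩⟩

end BirkhoffJames

theorem stmt_6_general {X Y : Type*} [NormedAddCommGroup X] [NormedSpace ℝ X]
    [NormedAddCommGroup Y] [NormedSpace ℝ Y]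
    (x : X) (T : X →L[ℝ] Y) :
    (∃ y ∈ ({y : X | BJOrth x y} \ {0}), BJOrth (T x) (T y)) ↔
      ∃ u ∈ ({y : X | BJOrth x y} \ {0}), ∃ v ∈ ({y : X | BJOrth x y} \ {0}),
        T u ∈ BJPlus (T x) ∧ T v ∈ BJMinus (T x) ∧
        ∀ α ∈ Set.Icc (0:ℝ) 1, (1 - α) • u + α • v ∈ ({y : X | BJOrth x y} \ {0}) := by
  constructor
  · rintro ⟨y, hy, hTy⟩
    obtain ⟨hplus, hminus⟩ := bjOrth_iff_mem_bjPlus_and_mem_bjMinus.mp hTy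
    refine ⟨y, hy, y, hy, hplus, hminus, fun α _ => ?_⟩
    rwa [← add_smul, sub_add_cancel, one_smul]
  · rintro ⟨u, -, v, -, hTu, hTv, hsegment⟩
    obtain ⟨α, hα, hTα⟩ := exists_bjOrth_of_path (f := fun α : ℝ => T ((1 - α) • u + α • v))
      (by fun_prop) (by simpa using hTu) (by simpa using hTv)
    exact ⟨_, hsegment α hα, hTα⟩

theorem stmt_6 {X Y : Type*} [NormedAddCommGroup X] [NormedSpace ℝ X]
    [NormedAddCommGroup Y] [NormedSpace ℝ Y]
    (hdim : Module.finrank ℝ X = 2) (x : X) (hx : x ≠ 0) (T : X →L[ℝ] Y) :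
    (∃ y ∈ ({y : X | BJOrth x y} \ {0}), BJOrth (T x) (T y)) ↔
      ∃ u ∈ ({y : X | BJOrth x y} \ {0}), ∃ v ∈ ({y : X | BJOrth x y} \ {0}),
        T u ∈ BJPlus (T x) ∧ T v ∈ BJMinus (T x) ∧
        ∀ α ∈ Set.Icc (0:ℝ) 1, (1 - α) • u + α • v ∈ ({y : X | BJOrth x y} \ {0}) :=
  stmt_6_general x T
end

section
/- Let X and Y be real normed linear spaces, let f₁, f₂ ∈ X* be linearly independent and g₁, g₂ ∈ Y*. Set K = {y ∈ X : f₁(y) ≥ 0, f₂(y) ≤ 0}, K₁ = {y ∈ Y : g₁(y) ≥ 0, g₂(y) ≤ 0}, K₂ = {y ∈ Y : g₁(y) ≥ 0, g₂(y) ≥ 0}. If a bounded linear operator T : X → Y satisfies T(ker f₁) ⊆ ker g₁ and T(ker f₂) ⊆ ker g₂, then T(K) ⊆ K₁ or T(K) ⊆ −K₁ or T(K) ⊆ K₂ or T(K) ⊆ −K₂. -/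
lemma aux_prop {X : Type*} [NormedAddCommGroup X] [NormedSpace ℝ X]
    (f h : X →L[ℝ] ℝ) (hk : ∀ z : X, f z = 0 → h z = 0) :
    ∃ c : ℝ, ∀ z : X, h z = c * f z := by
  by_cases hf : ∀ z : X, f z = 0
  · exact ⟨0, fun z => by simp [hk z (hf z)]⟩
  push_neg at hf
  obtain ⟨x, hx⟩ := hf
  refine ⟨h x / f x, fun z => ?_⟩
  have hz : f (z - (f z / f x) • x) = 0 := by
    simp [map_sub, map_smul, div_mul_cancel₀ _ hx]
  have := hk _ hz
  simp only [map_sub, map_smul, sub_eq_zero, smul_eq_mul] at this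
  rw [this]; ring

theorem stmt_7 {X Y : Type*} [NormedAddCommGroup X] [NormedSpace ℝ X]
    [NormedAddCommGroup Y] [NormedSpace ℝ Y]
    (f₁ f₂ : X →L[ℝ] ℝ) (hf : LinearIndependent ℝ ![f₁, f₂])
    (g₁ g₂ : Y →L[ℝ] ℝ) (T : X →L[ℝ] Y)
    (h₁ : ∀ z : X, f₁ z = 0 → g₁ (T z) = 0)
    (h₂ : ∀ z : X, f₂ z = 0 → g₂ (T z) = 0) :
    T '' {y : X | 0 ≤ f₁ y ∧ f₂ y ≤ 0} ⊆ {w : Y | 0 ≤ g₁ w ∧ g₂ w ≤ 0} ∨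
    T '' {y : X | 0 ≤ f₁ y ∧ f₂ y ≤ 0} ⊆ -{w : Y | 0 ≤ g₁ w ∧ g₂ w ≤ 0} ∨
    T '' {y : X | 0 ≤ f₁ y ∧ f₂ y ≤ 0} ⊆ {w : Y | 0 ≤ g₁ w ∧ 0 ≤ g₂ w} ∨
    T '' {y : X | 0 ≤ f₁ y ∧ f₂ y ≤ 0} ⊆ -{w : Y | 0 ≤ g₁ w ∧ 0 ≤ g₂ w} := by
  obtain ⟨c₁, hc₁⟩ := aux_prop f₁ (g₁.comp T) (by simpa using h₁)
  obtain ⟨c₂, hc₂⟩ := aux_prop f₂ (g₂.comp T) (by simpa using h₂)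
  simp only [ContinuousLinearMap.comp_apply] at hc₁ hc₂
  rcases le_or_gt 0 c₁ with p₁ | p₁ <;> rcases le_or_gt 0 c₂ with p₂ | p₂
  · left
    rintro w ⟨y, ⟨hy1, hy2⟩, rfl⟩
    exact ⟨by rw [hc₁]; positivity, by rw [hc₂]; exact mul_nonpos_of_nonneg_of_nonpos p₂ hy2⟩
  · right; right; left
    rintro w ⟨y, ⟨hy1, hy2⟩, rfl⟩
    exact ⟨by rw [hc₁]; positivity,
      by rw [hc₂]; nlinarith⟩
  · right; right; right
    rintro w ⟨y, ⟨hy1, hy2⟩, rfl⟩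
    refine ⟨?_, ?_⟩ <;> simp only [Set.mem_setOf_eq, map_neg, hc₁, hc₂]
    · nlinarith
    · nlinarith
  · right; left
    rintro w ⟨y, ⟨hy1, hy2⟩, rfl⟩
    refine ⟨?_, ?_⟩ <;> simp only [Set.mem_setOf_eq, map_neg, hc₁, hc₂]
    · nlinarith
    · nlinarith
end

section
/- Let V be a linear subspace of a real normed linear space X, and let g₁, g₂ ∈ X* be linearly independent. Let G = {(1−t)g₁ + t g₂ : t ∈ [0,1]} be the convex hull of {g₁, g₂}. Then V ⊆ ⋃_{g ∈ G} ker g if and only if there exists g ∈ G with V ⊆ ker g. -/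
private lemma opp_sign {a b t : ℝ} (h0 : 0 ≤ t) (h1 : t ≤ 1)
    (h : (1 - t) * a + t * b = 0) : a * b ≤ 0 := by
  rcases h0.eq_or_lt with rfl | ht0
  · have : a = 0 := by linarith
    simp [this]
  rcases h1.eq_or_lt with rfl | ht1
  · have : b = 0 := by linarith
    simp [this]
  have hb' : t * b = -((1 - t) * a) := by linarith
  have k : (1 - t) * a * (t * b) ≤ 0 := by
    rw [hb']
    nlinarith [sq_nonneg ((1 - t) * a)]
  have hpos : 0 < t * (1 - t) := mul_pos ht0 (by linarith)
  nlinarith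

theorem stmt_9 {X : Type*} [NormedAddCommGroup X] [NormedSpace ℝ X]
    (V : Submodule ℝ X) (g₁ g₂ : X →L[ℝ] ℝ)
    (hg : LinearIndependent ℝ ![g₁, g₂]) :
    ((V : Set X) ⊆ ⋃ t ∈ Set.Icc (0:ℝ) 1, {y : X | ((1 - t) • g₁ + t • g₂) y = 0}) ↔
      ∃ t ∈ Set.Icc (0:ℝ) 1, ∀ v ∈ V, ((1 - t) • g₁ + t • g₂) v = 0 := by
  constructor
  · intro h
    have key : ∀ v ∈ V, ∃ t : ℝ, 0 ≤ t ∧ t ≤ 1 ∧ (1 - t) * g₁ v + t * g₂ v = 0 := by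
      intro v hv
      have := h hv
      simp only [Set.mem_iUnion, Set.mem_setOf_eq, Set.mem_Icc,
        ContinuousLinearMap.add_apply, ContinuousLinearMap.coe_smul',
        Pi.smul_apply, smul_eq_mul] at this
      obtain ⟨t, ⟨ht0, ht1⟩, ht⟩ := this
      exact ⟨t, ht0, ht1, ht⟩
    by_cases hz : ∀ v ∈ V, g₁ v = 0 ∧ g₂ v = 0
    · refine ⟨0, ⟨le_refl 0, zero_le_one⟩, fun v hv => ?_⟩
      simp [(hz v hv).1, (hz v hv).2]
    · push_neg at hz
      obtain ⟨v₀, hv₀, hne⟩ := hz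
      set a₀ := g₁ v₀ with ha₀
      set b₀ := g₂ v₀ with hb₀
      have hne' : ¬(a₀ = 0 ∧ b₀ = 0) := by
        intro ⟨h1, h2⟩; exact (hne h1) h2
      obtain ⟨s, hs0, hs1, hs⟩ := key v₀ hv₀
      have hab : a₀ * b₀ ≤ 0 := opp_sign hs0 hs1 hs
      have hd : a₀ - b₀ ≠ 0 := by
        intro hd
        have : a₀ = b₀ := by linarith
        have : a₀ = 0 := by nlinarith
        exact hne' ⟨this, by linarith⟩
      -- proportionality: every v ∈ V has (g₁ v, g₂ v) parallel to (a₀, b₀)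
      have prop : ∀ v ∈ V, b₀ * g₁ v = a₀ * g₂ v := by
        intro v hv
        by_contra hD
        set a := g₁ v with ha
        set b := g₂ v with hb
        have hDne : a₀ * b - a * b₀ ≠ 0 := by
          intro h'; apply hD; linarith [h']
        set D := a₀ * b - a * b₀ with hDdef
        set w : X := ((b - a) / D) • v₀ + ((a₀ - b₀) / D) • v with hw
        have hwV : w ∈ V := V.add_mem (V.smul_mem _ hv₀) (V.smul_mem _ hv)
        have hg1w : g₁ w = 1 := by
          simp only [hw, map_add, map_smul, smul_eq_mul, ← ha₀, ← ha]
          field_simp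
          ring
        have hg2w : g₂ w = 1 := by
          simp only [hw, map_add, map_smul, smul_eq_mul, ← hb₀, ← hb]
          field_simp
          ring
        obtain ⟨t, ht0, ht1, ht⟩ := key w hwV
        rw [hg1w, hg2w] at ht
        linarith
      refine ⟨a₀ / (a₀ - b₀), ⟨?_, ?_⟩, ?_⟩
      · rw [div_nonneg_iff]
        rcases lt_or_gt_of_ne hd with hlt | hgt
        · have hb0 : 0 ≤ b₀ := by nlinarith
          exact Or.inr ⟨by nlinarith, by linarith⟩
        · exact Or.inl ⟨by nlinarith, by linarith⟩
      · rw [div_le_one_iff]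
        rcases lt_or_gt_of_ne hd with hlt | hgt
        · have hb0 : 0 ≤ b₀ := by nlinarith
          exact Or.inr (Or.inr ⟨hlt, by linarith⟩)
        · have hb0 : b₀ ≤ 0 := by nlinarith
          exact Or.inl ⟨hgt, by linarith⟩
      · intro v hv
        have hp := prop v hv
        simp only [ContinuousLinearMap.add_apply, ContinuousLinearMap.coe_smul',
          Pi.smul_apply, smul_eq_mul]
        have heq : (1 - a₀ / (a₀ - b₀)) * g₁ v + a₀ / (a₀ - b₀) * g₂ v
            = (a₀ * g₂ v - b₀ * g₁ v) / (a₀ - b₀) := by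
          field_simp
          ring
        rw [heq, ← hp, sub_self, zero_div]
  · rintro ⟨t, ht, hker⟩ v hv
    exact Set.mem_biUnion ht (hker v hv)
end

section
/- Let X, Y be real normed linear spaces, x ∈ X nonzero, and f₁, …, f_n ∈ J(x). A bounded linear operator T : X → Y preserves Birkhoff-James orthogonality at x with respect to ker f_i for all 1 ≤ i ≤ n if and only if T preserves Birkhoff-James orthogonality at x with respect to ker f for every f in the convex hull of {f₁, …, f_n}. -/
/-!
If `T x ≠ 0` and `g x = ‖x‖`, then `T` preserves Birkhoff–James orthogonality at `x` on `ker g`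
exactly when `(‖T x‖ / ‖x‖) • g = F ∘ T` for a support functional `F` at `T x`: Hahn–Banach on
`Y ⧸ T(ker g)`, where the class of `T x` keeps its norm, produces `F` vanishing on `T(ker g)`, and
a functional vanishing on `ker g` is a multiple of `g`. Since the support functionals at a nonzero
vector form a convex set, so do the `g` with this property, and the convex hull of the `f i`
lies among them.
-/

theorem LinearMap.eq_smul_of_ker_le {𝕜 E : Type*} [Field 𝕜] [AddCommGroup E] [Module 𝕜 E]
    {g h : E →ₗ[𝕜] 𝕜} {x : E} (hx : g x ≠ 0) (hker : ∀ z, g z = 0 → h z = 0) :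
    h = (h x / g x) • g := by
  ext z
  have hz := hker (z - (g z / g x) • x) (by simp [hx])
  simp only [map_sub, map_smul, smul_eq_mul, sub_eq_zero] at hz
  simp only [LinearMap.smul_apply, smul_eq_mul, hz]
  ring

section Normed

variable {X Y : Type*} [NormedAddCommGroup X] [NormedSpace ℝ X]
  [NormedAddCommGroup Y] [NormedSpace ℝ Y]

theorem bjOrth_zero_left (y : Y) : BJOrth 0 y := fun t => by
  simp only [norm_zero]; positivity

theorem mem_suppFun_of_norm_le_one_s11 {y : Y} (hy : y ≠ 0) {F : Y →L[ℝ] ℝ} (hF : ‖F‖ ≤ 1)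
    (hFy : F y = ‖y‖) : F ∈ suppFun y := by
  refine ⟨hF.antisymm ?_, hFy⟩
  have hy' : 0 < ‖y‖ := norm_pos_iff.mpr hy
  have := F.le_opNorm y
  rw [hFy, norm_norm] at this
  nlinarith

theorem convex_suppFun {y : Y} (hy : y ≠ 0) : Convex ℝ (suppFun y) := by
  have : suppFun y = Metric.closedBall 0 1 ∩ {F : Y →L[ℝ] ℝ | F y = ‖y‖} := by
    ext F
    simp only [Set.mem_inter_iff, Metric.mem_closedBall, dist_zero_right, Set.mem_ofPred_eq]
    exact ⟨fun hF => ⟨hF.1.le, hF.2⟩, fun hF => mem_suppFun_of_norm_le_one_s11 hy hF.1 hF.2⟩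
  rw [this]
  exact (convex_closedBall 0 1).inter
    (convex_hyperplane (ContinuousLinearMap.apply ℝ ℝ y).isLinear _)

theorem bjOrth_of_mem_suppFun {y w : Y} {F : Y →L[ℝ] ℝ} (hF : F ∈ suppFun y) (hw : F w = 0) :
    BJOrth y w := fun t =>
  calc ‖y‖ = F (y + t • w) := by simp [hF.2, hw]
    _ ≤ ‖F‖ * ‖y + t • w‖ := (le_abs_self _).trans (F.le_opNorm _)
    _ = ‖y + t • w‖ := by rw [hF.1, one_mul]

theorem exists_mem_suppFun_of_bjOrth {y : Y} (hy : y ≠ 0) (W : Submodule ℝ Y)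
    (h : ∀ w ∈ W, BJOrth y w) : ∃ F ∈ suppFun y, ∀ w ∈ W, F w = 0 := by
  have hdist : Metric.infDist y W = ‖y‖ := by
    refine le_antisymm ?_ ?_
    · simpa using Metric.infDist_le_dist_of_mem W.zero_mem (x := y)
    · refine (Metric.le_infDist ⟨0, W.zero_mem⟩).2 fun w hw => ?_
      simpa [dist_eq_norm, sub_eq_add_neg] using h w hw (-1)
  have hmk : ‖(Submodule.Quotient.mk y : Y ⧸ W)‖ = ‖y‖ :=
    (QuotientAddGroup.norm_mk (S := W.toAddSubgroup) y).trans hdist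
  obtain ⟨G, hG, hGy⟩ := exists_dual_vector ℝ _ (hmk ▸ norm_ne_zero_iff.mpr hy)
  refine ⟨G.comp W.mkQL, mem_suppFun_of_norm_le_one_s11 hy ?_ ?_, fun w hw => ?_⟩
  · refine ContinuousLinearMap.opNorm_le_bound _ zero_le_one fun v => ?_
    calc ‖G (W.mkQ v)‖ ≤ ‖G‖ * ‖W.mkQ v‖ := G.le_opNorm _
      _ ≤ 1 * ‖v‖ := by
        rw [hG]; exact mul_le_mul_of_nonneg_left (Submodule.Quotient.norm_mk_le W v) zero_le_one
  · simpa [hmk] using hGy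
  · simp [(Submodule.Quotient.mk_eq_zero W).mpr hw]

theorem forall_bjOrth_ker_iff {T : X →L[ℝ] Y} {x : X} (hTx : T x ≠ 0) {g : X →L[ℝ] ℝ}
    (hg : g x = ‖x‖) :
    (∀ z, g z = 0 → BJOrth (T x) (T z)) ↔ ∃ F ∈ suppFun (T x), F.comp T = (‖T x‖ / ‖x‖) • g := by
  have hgx : g x ≠ 0 := by
    rw [hg, norm_ne_zero_iff]; rintro rfl; exact hTx (map_zero T)
  constructor
  · intro h
    obtain ⟨F, hF, hFT⟩ := exists_mem_suppFun_of_bjOrth hTx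
      ((LinearMap.ker (g : X →ₗ[ℝ] ℝ)).map (T : X →ₗ[ℝ] Y)) (by rintro _ ⟨z, hz, rfl⟩; exact h z hz)
    have hprop := LinearMap.eq_smul_of_ker_le (h := (F.comp T : X →ₗ[ℝ] ℝ)) hgx
      fun z hz => hFT _ ⟨z, hz, rfl⟩
    refine ⟨F, hF, ContinuousLinearMap.ext fun z => ?_⟩
    simpa [hF.2, hg] using LinearMap.congr_fun hprop z
  · rintro ⟨F, hF, hFg⟩ z hz
    exact bjOrth_of_mem_suppFun hF (by simpa [hz] using congr($hFg z))

theorem convex_setOf_forall_bjOrth_ker (T : X →L[ℝ] Y) (x : X) :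
    Convex ℝ {g : X →L[ℝ] ℝ | g x = ‖x‖ ∧ ∀ z, g z = 0 → BJOrth (T x) (T z)} := by
  have hplane : Convex ℝ {g : X →L[ℝ] ℝ | g x = ‖x‖} :=
    convex_hyperplane (ContinuousLinearMap.apply ℝ ℝ x).isLinear _
  by_cases hTx : T x = 0
  · simpa [hTx, bjOrth_zero_left] using hplane
  have : {g : X →L[ℝ] ℝ | g x = ‖x‖ ∧ ∀ z, g z = 0 → BJOrth (T x) (T z)} =
      {g | g x = ‖x‖} ∩ ((‖T x‖ / ‖x‖) • LinearMap.id (R := ℝ) (M := X →L[ℝ] ℝ)) ⁻¹'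
        ((ContinuousLinearMap.precomp ℝ T).toLinearMap '' suppFun (T x)) := by
    ext g
    simp only [Set.mem_inter_iff, Set.mem_ofPred_eq, Set.mem_preimage, Set.mem_image]
    exact and_congr_right fun hg => (forall_bjOrth_ker_iff hTx hg).trans (by simp)
  rw [this]
  exact hplane.inter (((convex_suppFun hTx).linear_image _).linear_preimage _)

end Normed

theorem stmt_11_general {X Y : Type*} [NormedAddCommGroup X] [NormedSpace ℝ X]
    [NormedAddCommGroup Y] [NormedSpace ℝ Y]
    (x : X) (T : X →L[ℝ] Y) (n : ℕ)
    (f : Fin n → (X →L[ℝ] ℝ)) (hf : ∀ i, f i ∈ suppFun x) :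
    (∀ i : Fin n, ∀ z : X, f i z = 0 → BJOrth (T x) (T z)) ↔
      ∀ g ∈ convexHull ℝ (Set.range f), ∀ z : X, g z = 0 → BJOrth (T x) (T z) := by
  refine ⟨fun h g hg => ?_, fun h i => h (f i) (subset_convexHull ℝ _ ⟨i, rfl⟩)⟩
  refine (convexHull_min ?_ (convex_setOf_forall_bjOrth_ker T x) hg).2
  rintro _ ⟨i, rfl⟩
  exact ⟨(hf i).2, h i⟩

theorem stmt_11 {X Y : Type*} [NormedAddCommGroup X] [NormedSpace ℝ X]
    [NormedAddCommGroup Y] [NormedSpace ℝ Y]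
    (x : X) (hx : x ≠ 0) (T : X →L[ℝ] Y) (n : ℕ)
    (f : Fin n → (X →L[ℝ] ℝ)) (hf : ∀ i, f i ∈ suppFun x) :
    (∀ i : Fin n, ∀ z : X, f i z = 0 → BJOrth (T x) (T z)) ↔
      ∀ g ∈ convexHull ℝ (Set.range f), ∀ z : X, g z = 0 → BJOrth (T x) (T z) :=
  stmt_11_general x T n f hf
end

section
/- Let X be a two-dimensional real normed linear space, x ∈ X a non-smooth point (J(x) contains two linearly independent functionals), and T : X → X a linear operator. If V = {y : h₁(y) ≥ 0, h₂(y) ≤ 0} is the associated cone of x corresponding to two linearly independent h₁, h₂ ∈ Ext J(x), then the set D = {y ∈ x^⊥_B : Tx ⊥_B Ty} ∩ V is a normal cone, i.e., D + D ⊆ D, αD ⊆ D for all α ≥ 0, and D ∩ (−D) = {0}. -/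
section

open Module Submodule ContinuousLinearMap

theorem eq_zero_of_linearIndependent_of_forall_apply_eq_zero {𝕜 E ι : Type*} [RCLike 𝕜]
    [NormedAddCommGroup E] [NormedSpace 𝕜 E] [FiniteDimensional 𝕜 E] [Fintype ι]
    {φ : ι → E →L[𝕜] 𝕜} (hφ : LinearIndependent 𝕜 φ) (hcard : Fintype.card ι = finrank 𝕜 E)
    {w : E} (hw : ∀ i, φ i w = 0) : w = 0 := by
  have hdual : finrank 𝕜 (E →L[𝕜] 𝕜) = finrank 𝕜 E :=
    LinearMap.toContinuousLinearMap.symm.finrank_eq.trans Subspace.dual_finrank_eq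
  have hspan :
      span 𝕜 (Set.range φ) ≤ LinearMap.ker (ContinuousLinearMap.apply 𝕜 𝕜 w).toLinearMap :=
    span_le.2 <| Set.range_subset_iff.2 hw
  rw [hφ.span_eq_top_of_card_eq_finrank' (hcard.trans hdual.symm), top_le_iff] at hspan
  exact SeparatingDual.eq_zero_of_forall_dual_eq_zero fun ψ =>
    LinearMap.mem_ker.1 (hspan ▸ mem_top : ψ ∈ LinearMap.ker _)

theorem eq_div_smul_add_div_smul_of_finrank_eq_two {𝕜 E : Type*} [RCLike 𝕜]
    [NormedAddCommGroup E] [NormedSpace 𝕜 E] (hE : finrank 𝕜 E = 2)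
    {φ ψ : E →L[𝕜] 𝕜} {a b : E} (hφa : φ a = 0) (hψb : ψ b = 0) (hφb : φ b ≠ 0)
    (hψa : ψ a ≠ 0) (x : E) : x = (ψ x / ψ a) • a + (φ x / φ b) • b := by
  have : FiniteDimensional 𝕜 E := .of_finrank_pos (by omega)
  have hind : LinearIndependent 𝕜 ![φ, ψ] := by
    refine LinearIndependent.pair_iff.2 fun s t hst => ?_
    have ha := congrArg (· a) hst
    have hb := congrArg (· b) hst
    simp only [add_apply, smul_apply, zero_apply, smul_eq_mul] at ha hb
    simp_all
  rw [← sub_eq_zero]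
  refine eq_zero_of_linearIndependent_of_forall_apply_eq_zero hind (by simp [hE])
    (Fin.forall_fin_two.2 ⟨?_, ?_⟩) <;> simp [hφa, hψb, hφb, hψa]

variable {X Y : Type*} [NormedAddCommGroup X] [NormedSpace ℝ X] [NormedAddCommGroup Y]
  [NormedSpace ℝ Y]

theorem bjOrth_iff_exists_dual {x y : X} :
    BJOrth x y ↔ ∃ f : X →L[ℝ] ℝ, ‖f‖ ≤ 1 ∧ f x = ‖x‖ ∧ f y = 0 := by
  constructor
  · -- Hahn-Banach in `X ⧸ ℝ ∙ y`, where `x` has norm `infDist x (ℝ ∙ y) = ‖x‖`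
    intro h
    set F := ℝ ∙ y
    have hdist : ‖x‖ ≤ Metric.infDist x F := by
      refine (Metric.le_infDist ⟨0, F.zero_mem⟩).2 fun z hz => ?_
      obtain ⟨t, rfl⟩ := mem_span_singleton.1 hz
      simpa [dist_eq_norm, sub_eq_add_neg, ← neg_smul] using h (-t)
    have hxF : ‖(Submodule.Quotient.mk x : X ⧸ F)‖ = ‖x‖ :=
      le_antisymm (Quotient.norm_mk_le F x)
        (hdist.trans_eq (QuotientAddGroup.norm_mk (S := F.toAddSubgroup) x).symm)
    obtain ⟨g, hg, hgx⟩ := exists_dual_vector'' ℝ (Submodule.Quotient.mk x : X ⧸ F)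
    refine ⟨g.comp F.mkQL, ?_, by simpa [hxF] using hgx, ?_⟩
    · refine opNorm_le_bound _ zero_le_one fun z => ?_
      calc ‖g (F.mkQ z)‖ ≤ ‖g‖ * ‖F.mkQ z‖ := g.le_opNorm _
        _ ≤ 1 * ‖z‖ := by gcongr; exact Quotient.norm_mk_le F z
    · simp [(Quotient.mk_eq_zero F).2 (mem_span_singleton_self y)]
  · rintro ⟨f, hf, hfx, hfy⟩ t
    calc ‖x‖ = f (x + t • y) := by simp [hfx, hfy]
      _ ≤ ‖f‖ * ‖x + t • y‖ := (le_abs_self _).trans (f.le_opNorm _)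
      _ ≤ ‖x + t • y‖ := mul_le_of_le_one_left (norm_nonneg _) hf

theorem BJOrth.smul_right {x y : X} (h : BJOrth x y) (c : ℝ) : BJOrth x (c • y) :=
  fun t => by simpa [smul_smul] using h (t * c)

theorem BJOrth.of_apply_nonneg_of_apply_nonpos {x y : X} {f g : X →L[ℝ] ℝ}
    (hf : ‖f‖ ≤ 1) (hfx : f x = ‖x‖) (hg : ‖g‖ ≤ 1) (hgx : g x = ‖x‖)
    (hfy : 0 ≤ f y) (hgy : g y ≤ 0) : BJOrth x y := by
  rcases (hgy.trans hfy).eq_or_lt with hfg | hfg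
  · exact bjOrth_iff_exists_dual.2 ⟨f, hf, hfx, le_antisymm (hfg ▸ hgy) hfy⟩
  have hd : 0 < f y - g y := sub_pos.2 hfg
  set s := -g y / (f y - g y)
  set t := f y / (f y - g y)
  have hst : s + t = 1 := by rw [← add_div, neg_add_eq_sub, div_self hd.ne']
  have hnorm : s • f + t • g ∈ Metric.closedBall 0 1 :=
    convex_closedBall 0 1 (mem_closedBall_zero_iff.2 hf) (mem_closedBall_zero_iff.2 hg)
      (div_nonneg (neg_nonneg.2 hgy) hd.le) (div_nonneg hfy hd.le) hst
  refine bjOrth_iff_exists_dual.2 ⟨s • f + t • g, mem_closedBall_zero_iff.1 hnorm, ?_, ?_⟩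
  · simp [hfx, hgx, ← add_mul, hst]
  · simp only [add_apply, smul_apply, smul_eq_mul, s, t]
    field_simp
    ring

theorem BJOrth.map_add_of_finrank_eq_two (hX : finrank ℝ X = 2) (S : X →L[ℝ] Y) {x a b : X}
    (ha : BJOrth (S x) (S a)) (hb : BJOrth (S x) (S b))
    (hcone : ∀ s t : ℝ, 0 ≤ s → 0 ≤ t → s • a + t • b ≠ x ∧ s • a + t • b ≠ -x) :
    BJOrth (S x) (S (a + b)) := by
  obtain ⟨f, hf, hfx, hfa⟩ := bjOrth_iff_exists_dual.1 ha
  obtain ⟨g, hg, hgx, hgb⟩ := bjOrth_iff_exists_dual.1 hb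
  have hfab : f (S (a + b)) = f (S b) := by simp [hfa]
  have hgab : g (S (a + b)) = g (S a) := by simp [hgb]
  by_cases h₁ : 0 ≤ f (S b) ∧ g (S a) ≤ 0
  · exact .of_apply_nonneg_of_apply_nonpos hf hfx hg hgx (hfab ▸ h₁.1) (hgab ▸ h₁.2)
  by_cases h₂ : f (S b) ≤ 0 ∧ 0 ≤ g (S a)
  · exact .of_apply_nonneg_of_apply_nonpos hg hgx hf hfx (hgab ▸ h₂.2) (hfab ▸ h₂.1)
  -- otherwise `f (S b)` and `g (S a)` have the same strict sign, and `x` or `-x` lies in the cone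
  exfalso
  have hP : f (S b) ≠ 0 := by grind
  have hQ : g (S a) ≠ 0 := by grind
  have hx := eq_div_smul_add_div_smul_of_finrank_eq_two hX (φ := f.comp S) (ψ := g.comp S)
    hfa hgb hP hQ x
  simp only [ContinuousLinearMap.comp_apply, hfx, hgx] at hx
  rcases hP.lt_or_gt with hP | hP
  · have hQ : g (S a) < 0 := by grind
    refine (hcone (-‖S x‖ / g (S a)) (-‖S x‖ / f (S b)) ?_ ?_).2 ?_
    · exact div_nonneg_of_nonpos (neg_nonpos.2 (norm_nonneg _)) hQ.le
    · exact div_nonneg_of_nonpos (neg_nonpos.2 (norm_nonneg _)) hP.le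
    · rw [neg_div, neg_div, neg_smul, neg_smul, ← neg_add, ← hx]
  · have hQ : 0 < g (S a) := by grind
    exact (hcone _ _ (div_nonneg (norm_nonneg _) hQ.le)
      (div_nonneg (norm_nonneg _) hP.le)).1 hx.symm

def bjOrthCone (x : X) (T : X →L[ℝ] Y) (h₁ h₂ : X →L[ℝ] ℝ) : Set X :=
  {y : X | BJOrth x y ∧ BJOrth (T x) (T y)} ∩ {y : X | 0 ≤ h₁ y ∧ h₂ y ≤ 0}

variable {x a b : X} {T : X →L[ℝ] Y} {h₁ h₂ : X →L[ℝ] ℝ}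

theorem bjOrthCone_add_mem (hX : finrank ℝ X = 2) (hx : x ≠ 0) (hh₁ : h₁ ∈ suppFun x)
    (hh₂ : h₂ ∈ suppFun x) (ha : a ∈ bjOrthCone x T h₁ h₂) (hb : b ∈ bjOrthCone x T h₁ h₂) :
    a + b ∈ bjOrthCone x T h₁ h₂ := by
  obtain ⟨⟨-, hTa⟩, ha₁, ha₂⟩ := ha
  obtain ⟨⟨-, hTb⟩, hb₁, hb₂⟩ := hb
  have hx₀ : 0 < ‖x‖ := norm_pos_iff.2 hx
  have h₁ab : 0 ≤ h₁ (a + b) := by rw [map_add]; linarith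
  have h₂ab : h₂ (a + b) ≤ 0 := by rw [map_add]; linarith
  have hcone (s t : ℝ) (hs : 0 ≤ s) (ht : 0 ≤ t) : s • a + t • b ≠ x ∧ s • a + t • b ≠ -x := by
    refine ⟨fun h => ?_, fun h => ?_⟩
    · have : h₂ (s • a + t • b) ≤ 0 := by
        simp only [map_add, map_smul, smul_eq_mul]
        linarith [mul_nonpos_of_nonneg_of_nonpos hs ha₂, mul_nonpos_of_nonneg_of_nonpos ht hb₂]
      rw [h, hh₂.2] at this
      linarith
    · have : 0 ≤ h₁ (s • a + t • b) := by
        simp only [map_add, map_smul, smul_eq_mul]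
        linarith [mul_nonneg hs ha₁, mul_nonneg ht hb₁]
      rw [h, map_neg, hh₁.2] at this
      linarith
  exact ⟨⟨.of_apply_nonneg_of_apply_nonpos hh₁.1.le hh₁.2 hh₂.1.le hh₂.2 h₁ab h₂ab,
    .map_add_of_finrank_eq_two hX T hTa hTb hcone⟩, h₁ab, h₂ab⟩

theorem bjOrthCone_smul_mem {α : ℝ} (hα : 0 ≤ α) (ha : a ∈ bjOrthCone x T h₁ h₂) :
    α • a ∈ bjOrthCone x T h₁ h₂ := by
  obtain ⟨⟨hxa, hTa⟩, ha₁, ha₂⟩ := ha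
  refine ⟨⟨hxa.smul_right α, by simpa using hTa.smul_right α⟩, ?_, ?_⟩
  · simpa using mul_nonneg hα ha₁
  · simpa using mul_nonpos_of_nonneg_of_nonpos hα ha₂

theorem bjOrthCone_inter_neg (hX : finrank ℝ X = 2) (hind : LinearIndependent ℝ ![h₁, h₂]) :
    bjOrthCone x T h₁ h₂ ∩ -bjOrthCone x T h₁ h₂ = {0} := by
  have : FiniteDimensional ℝ X := .of_finrank_pos (by omega)
  ext y
  constructor
  · rintro ⟨⟨-, hy₁, hy₂⟩, -, hy₁', hy₂'⟩
    simp only [map_neg] at hy₁' hy₂'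
    exact eq_zero_of_linearIndependent_of_forall_apply_eq_zero hind (by simp [hX])
      (Fin.forall_fin_two.2 ⟨by simpa using le_antisymm (by linarith) hy₁,
        by simpa using le_antisymm hy₂ (by linarith)⟩)
  · rintro rfl
    simp [bjOrthCone, BJOrth]

end

theorem stmt_13 {X : Type*} [NormedAddCommGroup X] [NormedSpace ℝ X]
    (hdim : Module.finrank ℝ X = 2) (x : X) (hx : x ≠ 0) (T : X →L[ℝ] X)
    (h₁ h₂ : X →L[ℝ] ℝ)
    (hh₁ : h₁ ∈ Set.extremePoints ℝ (suppFun x))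
    (hh₂ : h₂ ∈ Set.extremePoints ℝ (suppFun x))
    (hind : LinearIndependent ℝ ![h₁, h₂]) :
    let D : Set X := {y : X | BJOrth x y ∧ BJOrth (T x) (T y)} ∩
      {y : X | 0 ≤ h₁ y ∧ h₂ y ≤ 0}
    (∀ a ∈ D, ∀ b ∈ D, a + b ∈ D) ∧
    (∀ α : ℝ, 0 ≤ α → ∀ a ∈ D, α • a ∈ D) ∧
    D ∩ (-D) = {0} :=
  ⟨fun _ ha _ hb => bjOrthCone_add_mem hdim hx hh₁.1 hh₂.1 ha hb,
    fun _ hα _ ha => bjOrthCone_smul_mem hα ha, bjOrthCone_inter_neg hdim hind⟩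
end

section
/- Let X and Y be finite-dimensional real normed linear spaces and let x ∈ X be a k-smooth point. Suppose f₁, …, f_k ∈ J(x) are linearly independent. If a linear operator T : X → Y satisfies Tx ⊥_B Tz for all z ∈ ker f_i, for each 1 ≤ i ≤ k, and Tx ≠ 0, then Tx is a p-smooth point of Y for some p ≥ k (i.e., dim span J(Tx) ≥ k). -/
/-!
Fix `i`. Since `T x` is Birkhoff–James orthogonal to the subspace `T (ker fᵢ)`, the image of `T x`
in the quotient `Y ⧸ T (ker fᵢ)` has norm `‖T x‖`; a Hahn–Banach norming functional of that image,
pulled back to `Y`, is a support functional `gᵢ` at `T x` vanishing on `T (ker fᵢ)` (James). Then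
`gᵢ ∘ T` vanishes on `ker fᵢ`, so `gᵢ ∘ T = (‖T x‖ / ‖x‖) • fᵢ`, and the `gᵢ` are linearly
independent because the `fᵢ` are.
-/

theorem exists_mem_suppFun_forall_eq_zero_of_bjOrth {Y : Type*} [NormedAddCommGroup Y]
    [NormedSpace ℝ Y] {y : Y} (hy : y ≠ 0) {W : Submodule ℝ Y} (hW : ∀ w ∈ W, BJOrth y w) :
    ∃ g ∈ suppFun y, ∀ w ∈ W, g w = 0 := by
  have hnorm : ‖(Submodule.Quotient.mk y : Y ⧸ W)‖ = ‖y‖ := by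
    refine le_antisymm (Submodule.Quotient.norm_mk_le W y)
      (QuotientAddGroup.le_norm_iff.2 fun m hm => ?_)
    have hmy : m - y ∈ W := (Submodule.Quotient.eq W).1 hm
    simpa using hW _ hmy 1
  obtain ⟨ψ, hψ, hψy⟩ := exists_dual_vector ℝ (W.mkQL y) (by simpa [hnorm] using hy)
  have hgy : (ψ.comp W.mkQL) y = ‖y‖ := by simpa [hnorm] using hψy
  have hle : ‖ψ.comp W.mkQL‖ ≤ 1 :=
    ψ.opNorm_comp_le W.mkQL |>.trans <| by
      rw [hψ, one_mul]
      exact W.mkQL.opNorm_le_bound zero_le_one fun z => by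
        simpa using Submodule.Quotient.norm_mk_le W z
  refine ⟨ψ.comp W.mkQL, ⟨le_antisymm hle ?_, hgy⟩, fun w hw => ?_⟩
  · have hy_le := (ψ.comp W.mkQL).le_opNorm y
    rw [hgy, Real.norm_of_nonneg (norm_nonneg y)] at hy_le
    exact (le_mul_iff_one_le_left (norm_pos_iff.2 hy)).1 hy_le
  · simp [(Submodule.Quotient.mk_eq_zero W).2 hw]

theorem LinearMap.apply_eq_div_mul_of_forall_eq_zero {K M : Type*} [Field K] [AddCommGroup M]
    [Module K M] {φ f : M →ₗ[K] K} {x : M} (hx : f x ≠ 0) (h : ∀ z, f z = 0 → φ z = 0) (z : M) :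
    φ z = φ x / f x * f z := by
  have hz : f (z - (f z / f x) • x) = 0 := by simp [hx]
  have hφz := h _ hz
  rw [map_sub, map_smul, smul_eq_mul, sub_eq_zero] at hφz
  rw [hφz]; ring

theorem exists_mem_suppFun_comp_eq_smul {X Y : Type*} [NormedAddCommGroup X] [NormedSpace ℝ X]
    [NormedAddCommGroup Y] [NormedSpace ℝ Y] (T : X →L[ℝ] Y) {x : X} (hx : x ≠ 0) (hTx : T x ≠ 0)
    {f : X →L[ℝ] ℝ} (hf : f ∈ suppFun x) (hpres : ∀ z, f z = 0 → BJOrth (T x) (T z)) :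
    ∃ g ∈ suppFun (T x), g.comp T = (‖T x‖ / ‖x‖) • f := by
  obtain ⟨g, hg, hgT⟩ := exists_mem_suppFun_forall_eq_zero_of_bjOrth hTx
    (W := (LinearMap.ker (f : X →ₗ[ℝ] ℝ)).map (T : X →ₗ[ℝ] Y))
    (by rintro _ ⟨z, hz, rfl⟩; exact hpres z hz)
  refine ⟨g, hg, ContinuousLinearMap.ext fun z => ?_⟩
  have hgTz := LinearMap.apply_eq_div_mul_of_forall_eq_zero (φ := (g.comp T : X →ₗ[ℝ] ℝ))
    (f := (f : X →ₗ[ℝ] ℝ)) (x := x) (by simpa [hf.2] using hx)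
    (fun z hz => hgT _ ⟨z, hz, rfl⟩) z
  simpa [hf.2, hg.2] using hgTz

theorem stmt_15_general {X Y : Type*} [NormedAddCommGroup X] [NormedSpace ℝ X]
    [NormedAddCommGroup Y] [NormedSpace ℝ Y]
    [FiniteDimensional ℝ Y]
    (x : X) (k : ℕ)
    (f : Fin k → (X →L[ℝ] ℝ)) (hf : ∀ i, f i ∈ suppFun x)
    (hind : LinearIndependent ℝ f)
    (T : X →L[ℝ] Y) (hTx : T x ≠ 0)
    (hpres : ∀ i : Fin k, ∀ z : X, f i z = 0 → BJOrth (T x) (T z)) :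
    k ≤ Module.finrank ℝ (Submodule.span ℝ (suppFun (T x))) := by
  have hx : x ≠ 0 := by rintro rfl; exact hTx (map_zero T)
  choose g hg hgT using fun i => exists_mem_suppFun_comp_eq_smul T hx hTx (hf i) (hpres i)
  have hc : ‖T x‖ / ‖x‖ ≠ 0 := by positivity
  have hgind : LinearIndependent ℝ g := by
    let precompT := ((ContinuousLinearMap.compL ℝ X Y ℝ).flip T).toLinearMap
    have hcomp : precompT ∘ g = (fun _ : Fin k => Units.mk0 _ hc) • f := funext hgT
    exact .of_comp precompT (hcomp ▸ hind.units_smul _)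
  calc k = Module.finrank ℝ (Submodule.span ℝ (Set.range g)) := by
        rw [finrank_span_eq_card hgind, Fintype.card_fin]
    _ ≤ _ := Submodule.finrank_mono (Submodule.span_mono (Set.range_subset_iff.2 hg))

theorem stmt_15 {X Y : Type*} [NormedAddCommGroup X] [NormedSpace ℝ X]
    [NormedAddCommGroup Y] [NormedSpace ℝ Y]
    [FiniteDimensional ℝ X] [FiniteDimensional ℝ Y]
    (x : X) (hx : x ≠ 0) (k : ℕ)
    (hsm : Module.finrank ℝ (Submodule.span ℝ (suppFun x)) = k)
    (f : Fin k → (X →L[ℝ] ℝ)) (hf : ∀ i, f i ∈ suppFun x)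
    (hind : LinearIndependent ℝ f)
    (T : X →L[ℝ] Y) (hTx : T x ≠ 0)
    (hpres : ∀ i : Fin k, ∀ z : X, f i z = 0 → BJOrth (T x) (T z)) :
    k ≤ Module.finrank ℝ (Submodule.span ℝ (suppFun (T x))) :=
  stmt_15_general x k f hf hind T hTx hpres
end

section
/- Let X and Y be n-dimensional real normed linear spaces and let x ∈ X be nonzero with n linearly independent support functionals f₁, …, f_n ∈ J(x). If a linear operator T : X → Y satisfies Tx ⊥_B Tz for all z ∈ ker f_i, for each 1 ≤ i ≤ n, then either Tx = 0 or T is bijective. -/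
/-!
If `T z = 0` with `z ≠ 0`, some `f i` does not vanish at `z`, because `n` independent
functionals span the dual. Shifting `x` along `z` into `ker (f i)` does not change its image,
so `T x ⊥_B T x`, which forces `T x = 0`. Otherwise `T` is injective, hence bijective since
`dim X = dim Y`.
-/

open Module

theorem BJOrth.eq_zero_of_self {F : Type*} [NormedAddCommGroup F] [NormedSpace ℝ F] {y : F}
    (h : BJOrth y y) : y = 0 := by
  simpa using h (-1)

theorem LinearMap.map_eq_zero_of_bjOrth_on_ker {E F : Type*} [AddCommGroup E] [Module ℝ E]
    [NormedAddCommGroup F] [NormedSpace ℝ F] (T : E →ₗ[ℝ] F) (g : Dual ℝ E) {x z : E}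
    (hz : T z = 0) (hgz : g z ≠ 0) (h : ∀ w, g w = 0 → BJOrth (T x) (T w)) : T x = 0 := by
  have hw : g (x - (g x / g z) • z) = 0 := by
    rw [map_sub, map_smul, smul_eq_mul, div_mul_cancel₀ _ hgz, sub_self]
  have horth := h _ hw
  rw [map_sub, map_smul, hz, smul_zero, sub_zero] at horth
  exact horth.eq_zero_of_self

theorem LinearIndependent.exists_dual_apply_ne_zero {K V ι : Type*} [Field K] [AddCommGroup V]
    [Module K V] [FiniteDimensional K V] [Fintype ι] {f : ι → Dual K V}
    (hf : LinearIndependent K f) (hcard : Fintype.card ι = finrank K V) {v : V} (hv : v ≠ 0) :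
    ∃ i, f i v ≠ 0 := by
  by_contra! h
  have hspan := hf.span_eq_top_of_card_eq_finrank' (hcard.trans Subspace.dual_finrank_eq.symm)
  have hle : Submodule.span K (Set.range f) ≤ LinearMap.ker (Dual.eval K V v) :=
    Submodule.span_le.2 (Set.range_subset_iff.2 h)
  refine hv ((forall_dual_apply_eq_zero_iff K v).1 fun φ => ?_)
  exact hle (hspan ▸ Submodule.mem_top : φ ∈ Submodule.span K (Set.range f))

theorem stmt_16_general {X Y : Type*} [NormedAddCommGroup X] [NormedSpace ℝ X]
    [NormedAddCommGroup Y] [NormedSpace ℝ Y] (n : ℕ)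
    (hX : Module.finrank ℝ X = n) (hY : Module.finrank ℝ Y = n)
    [FiniteDimensional ℝ X] [FiniteDimensional ℝ Y]
    (x : X)
    (f : Fin n → (X →L[ℝ] ℝ))
    (hind : LinearIndependent ℝ f)
    (T : X →L[ℝ] Y)
    (hpres : ∀ i : Fin n, ∀ z : X, f i z = 0 → BJOrth (T x) (T z)) :
    T x = 0 ∨ Function.Bijective T := by
  refine or_iff_not_imp_left.2 fun hTx => ?_
  have hind' : LinearIndependent ℝ fun i => (f i : Dual ℝ X) :=
    hind.map' (ContinuousLinearMap.coeLM ℝ) (LinearMap.ker_eq_bot_of_injective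
      ContinuousLinearMap.coe_injective)
  have hinj : Function.Injective T := by
    refine (injective_iff_map_eq_zero T).2 fun z hz => by_contra fun hz0 => ?_
    obtain ⟨i, hi⟩ := hind'.exists_dual_apply_ne_zero (by simp [hX]) hz0
    exact hTx ((T : X →ₗ[ℝ] Y).map_eq_zero_of_bjOrth_on_ker (f i) hz hi (hpres i))
  exact ⟨hinj,
    (LinearMap.injective_iff_surjective_of_finrank_eq_finrank (hX.trans hY.symm)).1 hinj⟩

theorem stmt_16 {X Y : Type*} [NormedAddCommGroup X] [NormedSpace ℝ X]
    [NormedAddCommGroup Y] [NormedSpace ℝ Y] (n : ℕ)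
    (hX : Module.finrank ℝ X = n) (hY : Module.finrank ℝ Y = n)
    [FiniteDimensional ℝ X] [FiniteDimensional ℝ Y]
    (x : X) (hx : x ≠ 0)
    (f : Fin n → (X →L[ℝ] ℝ)) (hf : ∀ i, f i ∈ suppFun x)
    (hind : LinearIndependent ℝ f)
    (T : X →L[ℝ] Y)
    (hpres : ∀ i : Fin n, ∀ z : X, f i z = 0 → BJOrth (T x) (T z)) :
    T x = 0 ∨ Function.Bijective T :=
  stmt_16_general n hX hY x f hind T hpres
end

section
/- Let X and Y be two-dimensional real polyhedral normed linear spaces (the unit ball is a polygon). If a nonzero linear operator T : X → Y preserves Birkhoff-James orthogonality at two linearly independent extreme points of the unit ball of X, then T is bijective. -/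
/-- A finite-dimensional normed space is polyhedral if its closed unit ball has
finitely many extreme points. -/
def IsPolyhedralSpace (X : Type*) [NormedAddCommGroup X] [NormedSpace ℝ X] : Prop :=
  (Set.extremePoints ℝ (Metric.closedBall (0 : X) 1)).Finite

/-! At a vertex `u` of a polygonal unit ball, the two edges through `u` give two independent
directions Birkhoff–James orthogonal to `u`. If `T` were not injective, its range would be the
line through `T e` for whichever of `T u`, `T v` is nonzero; on that line `T e ⊥ T y` forces
`T y = 0`, so `T` would kill both edge directions at `e` and hence vanish. -/

open Module Set Metric

section Orthogonality

variable {X : Type*} [NormedAddCommGroup X] [NormedSpace ℝ X]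

theorem bjOrth_of_le_norm {φ : X →ₗ[ℝ] ℝ} (hφ : ∀ z, φ z ≤ ‖z‖) {x y : X} (hx : φ x = ‖x‖)
    (hy : φ y = 0) : BJOrth x y := fun t => by
  simpa [hx, hy] using hφ (x + t • y)

theorem BJOrth.eq_zero_of_mem_span_singleton {x y : X} (h : BJOrth x y) (hy : y ∈ ℝ ∙ x) :
    y = 0 := by
  obtain ⟨c, rfl⟩ := Submodule.mem_span_singleton.mp hy
  rcases eq_or_ne c 0 with rfl | hc
  · exact zero_smul ℝ x
  · have hx := h (-c⁻¹)
    rw [smul_smul, neg_mul, inv_mul_cancel₀ hc, neg_one_smul, add_neg_cancel, norm_zero,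
      norm_le_zero_iff] at hx
    rw [hx, smul_zero]

end Orthogonality

theorem eq_of_mem_extremePoints_of_sub_eq_smul_sub {E : Type*} [AddCommGroup E] [Module ℝ E]
    {A : Set E} {u p q : E} (hu : u ∈ extremePoints ℝ A) (hp : p ∈ A) (hq : q ∈ A) {t : ℝ}
    (ht : 0 < t) (h : u - p = t • (q - u)) : p = u := by
  refine ((mem_extremePoints.mp hu).2 p hp q hq ?_).1
  refine mem_openSegment_iff_div.mpr ⟨1, t, one_pos, ht, ?_⟩
  have hu' : (1 + t) • u = p + t • q := by linear_combination (norm := module) h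
  rw [← inv_smul_smul₀ (by positivity : 1 + t ≠ 0) u, hu']
  module

namespace IsPolyhedralSpace

variable {X : Type*} [NormedAddCommGroup X] [NormedSpace ℝ X] [FiniteDimensional ℝ X]

theorem convexHull_extremePoints (hX : IsPolyhedralSpace X) :
    convexHull ℝ (extremePoints ℝ (closedBall (0 : X) 1)) = closedBall 0 1 := by
  have h := closure_convexHull_extremePoints (isCompact_closedBall (0 : X) 1)
    (convex_closedBall 0 1)
  rwa [(hX.isCompact_convexHull ℝ).isClosed.closure_eq] at h

theorem le_mul_norm_of_forall_extremePoints (hX : IsPolyhedralSpace X) {φ : X →ₗ[ℝ] ℝ}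
    {c : ℝ} (hφ : ∀ e ∈ extremePoints ℝ (closedBall (0 : X) 1), φ e ≤ c) (z : X) :
    φ z ≤ c * ‖z‖ := by
  have hball : closedBall (0 : X) 1 ⊆ {w | φ w ≤ c} := by
    rw [← hX.convexHull_extremePoints]
    exact convexHull_min hφ (convex_halfSpace_le φ.isLinear c)
  rcases eq_or_ne z 0 with rfl | hz
  · simp
  · have hpos := norm_pos_iff.mpr hz
    have h : φ (‖z‖⁻¹ • z) ≤ c := hball (by simp [norm_smul, hpos.ne'])
    rwa [map_smul, smul_eq_mul, inv_mul_le_iff₀ hpos, mul_comm] at h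

/-- With `f` a norming functional of `u`, the extreme point `p` maximising `(f e - 1) / g e`
over those with `g e > 0` is the other end of an edge at `u`: if `r` is that maximum,
`f - r • g` still norms `u` and vanishes on `p - u`. -/
theorem exists_bjOrth_sub_of_pos (hX : IsPolyhedralSpace X) {u : X}
    (hu : u ∈ extremePoints ℝ (closedBall (0 : X) 1)) {g : X →ₗ[ℝ] ℝ} (hg : g ≠ 0)
    (hgu : g u = 0) : ∃ p ∈ closedBall (0 : X) 1, BJOrth u (p - u) ∧ 0 < g p := by
  set E := extremePoints ℝ (closedBall (0 : X) 1)
  obtain ⟨z, hz⟩ : ∃ z, g z ≠ 0 := by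
    by_contra! h
    exact hg (LinearMap.ext h)
  have : Nontrivial X := nontrivial_of_ne z 0 (by rintro rfl; simp at hz)
  have hu1 : ‖u‖ = 1 := by simpa using extremePoints_closedBall_subset_sphere hu
  have hE1 : ∀ e ∈ E, ‖e‖ ≤ 1 := fun e he => mem_closedBall_zero_iff.mp (extremePoints_subset he)
  obtain ⟨f, hf1, hfu⟩ := exists_dual_vector ℝ u (by simp [hu1])
  have hf : ∀ w, f w ≤ ‖w‖ := fun w =>
    (le_abs_self _).trans (by simpa [hf1] using f.le_opNorm w)
  have hS : {e ∈ E | 0 < g e}.Nonempty := by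
    by_contra! hS
    have hg0 := hX.le_mul_norm_of_forall_extremePoints (φ := g) (c := 0) fun e he =>
      not_lt.mp fun hge => hS.subset ⟨he, hge⟩
    have h1 := hg0 z
    have h2 := hg0 (-z)
    simp only [zero_mul, map_neg, neg_nonpos] at h1 h2
    exact hz (le_antisymm h1 h2)
  obtain ⟨p, ⟨hpE, hgp⟩, hpmax⟩ := Set.exists_max_image _ (fun e => (f e - 1) / g e)
    (hX.subset (sep_subset _ _)) hS
  set r := (f p - 1) / g p
  have hr : r ≤ 0 := div_nonpos_of_nonpos_of_nonneg (by linarith [hf p, hE1 p hpE]) hgp.le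
  have hrp : r * g p = f p - 1 := div_mul_cancel₀ _ hgp.ne'
  set φ := f.toLinearMap - r • g
  have hφE : ∀ e ∈ E, φ e ≤ 1 := by
    intro e he
    have hfe : f e ≤ 1 := (hf e).trans (hE1 e he)
    simp only [φ, LinearMap.sub_apply, LinearMap.smul_apply, smul_eq_mul,
      ContinuousLinearMap.coe_coe]
    rcases lt_or_ge 0 (g e) with hge | hge
    · have := hpmax e ⟨he, hge⟩
      rw [div_le_iff₀ hge] at this
      linarith
    · nlinarith
  refine ⟨p, extremePoints_subset hpE, bjOrth_of_le_norm (φ := φ) (fun w => ?_) ?_ ?_, hgp⟩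
  · simpa using hX.le_mul_norm_of_forall_extremePoints hφE w
  · simp [φ, hgu, hfu, hu1]
  · simp [φ, hgu, hfu, hu1, hrp]

theorem exists_linearIndependent_bjOrth (hX : IsPolyhedralSpace X) (hdim : 2 ≤ finrank ℝ X)
    {u : X} (hu : u ∈ extremePoints ℝ (closedBall (0 : X) 1)) :
    ∃ y₁ y₂ : X, LinearIndependent ℝ ![y₁, y₂] ∧ BJOrth u y₁ ∧ BJOrth u y₂ := by
  have hspan : ℝ ∙ u < ⊤ := by
    refine lt_top_iff_ne_top.mpr fun h => ?_
    have := finrank_span_le_card (R := ℝ) ({u} : Set X)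
    rw [h, finrank_top, toFinset_singleton, Finset.card_singleton] at this
    omega
  obtain ⟨g, hg, hug⟩ := (ℝ ∙ u).exists_le_ker_of_lt_top hspan
  have hgu : g u = 0 := hug (Submodule.mem_span_singleton_self u)
  obtain ⟨p, hp, hup, hgp⟩ := hX.exists_bjOrth_sub_of_pos hu hg hgu
  obtain ⟨q, hq, huq, hgq⟩ := hX.exists_bjOrth_sub_of_pos hu (neg_ne_zero.mpr hg) (by simp [hgu])
  rw [LinearMap.neg_apply, neg_pos] at hgq
  refine ⟨p - u, q - u, linearIndependent_fin2.mpr ⟨?_, fun a ha => ?_⟩, hup, huq⟩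
  · intro h
    rw [sub_eq_zero.mp h, hgu] at hgq
    exact hgq.false
  · simp only [Matrix.cons_val_one, Matrix.cons_val_zero] at ha
    have hga : a * g q = g p := by simpa [hgu] using congrArg g ha
    have hpu := eq_of_mem_extremePoints_of_sub_eq_smul_sub hu hp hq (t := -a) (by nlinarith)
      (by rw [neg_smul, ha]; abel)
    simp [hpu, hgu] at hgp

end IsPolyhedralSpace

section LinearMap

variable {K V W : Type*} [Field K] [AddCommGroup V] [Module K V] [AddCommGroup W] [Module K W]

theorem LinearMap.range_eq_span_singleton_of_not_injective [FiniteDimensional K V]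
    (hV : finrank K V ≤ 2) {f : V →ₗ[K] W} (hf : ¬Function.Injective f) {e : V} (he : f e ≠ 0) :
    range f = K ∙ f e := by
  have hker : 1 ≤ finrank K (ker f) :=
    Submodule.one_le_finrank_iff.mpr fun h => hf (LinearMap.ker_eq_bot.mp h)
  have hrank := f.finrank_range_add_finrank_ker
  refine (Submodule.eq_of_le_of_finrank_le ?_ ?_).symm
  · exact (Submodule.span_singleton_le_iff_mem _ _).mpr (LinearMap.mem_range_self f e)
  · rw [finrank_span_singleton he]
    omega

theorem LinearMap.eq_zero_of_linearIndependent_pair (hV : finrank K V = 2) {a b : V}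
    (hab : LinearIndependent K ![a, b]) {f : V →ₗ[K] W} (ha : f a = 0) (hb : f b = 0) :
    f = 0 := by
  refine LinearMap.ext_on_range (hab.span_eq_top_of_card_eq_finrank (by simp [hV])) fun i => ?_
  fin_cases i <;> simpa

end LinearMap

theorem stmt_17_general {X Y : Type*} [NormedAddCommGroup X] [NormedSpace ℝ X]
    [NormedAddCommGroup Y] [NormedSpace ℝ Y]
    (hX : Module.finrank ℝ X = 2) (hY : Module.finrank ℝ Y = 2)
    (hpX : IsPolyhedralSpace X)
    (T : X →L[ℝ] Y) (hT : T ≠ 0)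
    (u v : X) (hu : u ∈ Set.extremePoints ℝ (Metric.closedBall (0 : X) 1))
    (hv : v ∈ Set.extremePoints ℝ (Metric.closedBall (0 : X) 1))
    (hind : LinearIndependent ℝ ![u, v])
    (hpu : ∀ y : X, BJOrth u y → BJOrth (T u) (T y))
    (hpv : ∀ y : X, BJOrth v y → BJOrth (T v) (T y)) :
    Function.Bijective T := by
  have := FiniteDimensional.of_finrank_eq_succ hX
  have := FiniteDimensional.of_finrank_eq_succ hY
  have hinj : Function.Injective T := by
    by_contra hninj
    have hvanish : ∀ e ∈ extremePoints ℝ (closedBall (0 : X) 1),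
        (∀ y, BJOrth e y → BJOrth (T e) (T y)) → T e = 0 := by
      intro e he hpe
      by_contra hTe
      obtain ⟨y₁, y₂, hy, h₁, h₂⟩ := hpX.exists_linearIndependent_bjOrth hX.ge he
      have hrange := (T : X →ₗ[ℝ] Y).range_eq_span_singleton_of_not_injective hX.le hninj hTe
      have hTy : ∀ y, BJOrth (T e) (T y) → T y = 0 := fun y hy =>
        hy.eq_zero_of_mem_span_singleton (hrange ▸ LinearMap.mem_range_self _ y)
      have hT0 := LinearMap.eq_zero_of_linearIndependent_pair hX hy (f := (T : X →ₗ[ℝ] Y))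
        (hTy _ (hpe _ h₁)) (hTy _ (hpe _ h₂))
      exact hTe (by simpa using LinearMap.congr_fun hT0 e)
    exact hT (ContinuousLinearMap.coe_injective
      (LinearMap.eq_zero_of_linearIndependent_pair hX hind (hvanish u hu hpu) (hvanish v hv hpv)))
  exact ⟨hinj, (LinearMap.injective_iff_surjective_of_finrank_eq_finrank (hX.trans hY.symm)).mp hinj⟩

theorem stmt_17 {X Y : Type*} [NormedAddCommGroup X] [NormedSpace ℝ X]
    [NormedAddCommGroup Y] [NormedSpace ℝ Y]
    (hX : Module.finrank ℝ X = 2) (hY : Module.finrank ℝ Y = 2)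
    (hpX : IsPolyhedralSpace X) (hpY : IsPolyhedralSpace Y)
    (T : X →L[ℝ] Y) (hT : T ≠ 0)
    (u v : X) (hu : u ∈ Set.extremePoints ℝ (Metric.closedBall (0 : X) 1))
    (hv : v ∈ Set.extremePoints ℝ (Metric.closedBall (0 : X) 1))
    (hind : LinearIndependent ℝ ![u, v])
    (hpu : ∀ y : X, BJOrth u y → BJOrth (T u) (T y))
    (hpv : ∀ y : X, BJOrth v y → BJOrth (T v) (T y)) :
    Function.Bijective T :=
  stmt_17_general hX hY hpX T hT u v hu hv hind hpu hpv
end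

section
/- Let X be an n-dimensional real polyhedral normed linear space and T : X → X a norm-one linear operator. Then T is an isometry if and only if: (i) ‖Tu‖ = ‖Tv‖ for all extreme points u, v of the unit ball B_X, and (ii) for each extreme point u of B_X there exist n linearly independent functionals f₁, …, f_n ∈ J(u) such that Tu ⊥_B Tz for all z ∈ ker f_i, for each 1 ≤ i ≤ n. -/
/-!
In a polyhedral space the unit ball is the convex hull of its finitely many vertices. Hence an
operator attains its norm at a vertex, and each vertex `u` is exposed by a nonempty open cone of
functionals, whose normalisations give `n` independent support functionals at `u`; for an isometry
they witness the orthogonality in (ii).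

Conversely, (i) and `‖T‖ = 1` give `‖T u‖ = 1` at every vertex, and then `T u ⊥ T (ker fᵢ)` turns
into `|fᵢ y| ≤ ‖T y‖`. So `T` is injective and `u` is a vertex of `T⁻¹ B_X`, as `n` independent
functionals attain their maximum on it at `u`. Thus `T` maps the finite set of vertices injectively
into itself, i.e. permutes them, and `T⁻¹` is a contraction too.
-/

open Set Metric Module

section LinearAlgebra

variable {K V : Type*} [Field K] [AddCommGroup V] [Module K V] [FiniteDimensional K V]

theorem exists_linearIndependent_fin_subset {s : Set V} (hs : ⊤ ≤ Submodule.span K s) {n : ℕ}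
    (hV : finrank K V = n) : ∃ f : Fin n → V, LinearIndependent K f ∧ ∀ i, f i ∈ s := by
  let b := Basis.ofSpan hs
  let b' := b.reindex (b.indexEquiv (finBasisOfFinrankEq K V hV))
  exact ⟨b', b'.linearIndependent, fun i => Basis.ofSpan_subset hs
    (b.range_reindex _ ▸ mem_range_self i : b' i ∈ range b)⟩

end LinearAlgebra

section Dual

variable {X : Type*} [NormedAddCommGroup X] [NormedSpace ℝ X] [FiniteDimensional ℝ X]

theorem finrank_continuousDual : finrank ℝ (X →L[ℝ] ℝ) = finrank ℝ X := by
  rw [← (LinearMap.toContinuousLinearMap : (X →ₗ[ℝ] ℝ) ≃ₗ[ℝ] (X →L[ℝ] ℝ)).finrank_eq]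
  exact Subspace.dual_finrank_eq

theorem eq_zero_of_linearIndependent_of_forall_apply_eq_zero_s18 {n : ℕ} (hX : finrank ℝ X = n)
    {f : Fin n → X →L[ℝ] ℝ} (hf : LinearIndependent ℝ f) {x : X} (hx : ∀ i, f i x = 0) :
    x = 0 := by
  have hspan : Submodule.span ℝ (range f) = ⊤ :=
    hf.span_eq_top_of_card_eq_finrank' (by rw [Fintype.card_fin, finrank_continuousDual, hX])
  have hker : Submodule.span ℝ (range f) ≤
      LinearMap.ker (ContinuousLinearMap.apply ℝ ℝ x : (X →L[ℝ] ℝ) →ₗ[ℝ] ℝ) :=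
    Submodule.span_le.2 (by rintro _ ⟨i, rfl⟩; exact hx i)
  exact SeparatingDual.eq_zero_of_forall_dual_eq_zero fun g => hker (hspan ▸ Submodule.mem_top)

theorem mem_extremePoints_of_linearIndependent {n : ℕ} (hX : finrank ℝ X = n) {s : Set X}
    {u : X} (hu : u ∈ s) {f : Fin n → X →L[ℝ] ℝ} (hf : LinearIndependent ℝ f)
    (hmax : ∀ i, ∀ y ∈ s, f i y ≤ f i u) : u ∈ extremePoints ℝ s := by
  refine mem_extremePoints_iff_left.2 ⟨hu, fun a ha b hb ⟨c, d, hc, hd, hcd, hab⟩ => ?_⟩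
  refine sub_eq_zero.1 (eq_zero_of_linearIndependent_of_forall_apply_eq_zero_s18 hX hf fun i => ?_)
  have hcomb : c * f i a + d * f i b = f i u := by
    simpa only [map_add, map_smul, smul_eq_mul] using congrArg (f i) hab
  have hsum : c * (f i a - f i u) + d * (f i b - f i u) = 0 := by
    linear_combination hcomb - f i u * hcd
  have hfa := hmax i a ha
  have hfb := hmax i b hb
  rw [map_sub]
  nlinarith [mul_nonpos_of_nonneg_of_nonpos hd.le (sub_nonpos.2 hfb)]

end Dual

section UnitBall

variable {X Y : Type*} [NormedAddCommGroup X] [NormedSpace ℝ X]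
  [NormedAddCommGroup Y] [NormedSpace ℝ Y]

theorem neg_mem_extremePoints_closedBall {u : X}
    (hu : u ∈ extremePoints ℝ (closedBall (0 : X) 1)) :
    -u ∈ extremePoints ℝ (closedBall (0 : X) 1) := by
  have hneg : (LinearEquiv.neg ℝ : X ≃ₗ[ℝ] X) '' closedBall 0 1 = closedBall 0 1 := by
    ext; simp
  have h := image_extremePoints (𝕜 := ℝ) (LinearEquiv.neg ℝ : X ≃ₗ[ℝ] X) (closedBall 0 1)
  rw [hneg] at h
  exact h ▸ mem_image_of_mem _ hu

theorem norm_eq_one_of_mem_extremePoints_closedBall [Nontrivial X] {u : X}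
    (hu : u ∈ extremePoints ℝ (closedBall (0 : X) 1)) : ‖u‖ = 1 := by
  simpa using extremePoints_closedBall_subset_sphere hu

theorem isOpen_setOf_forall_apply_lt {S : Set X} (hS : S.Finite) (u : X) :
    IsOpen {g : X →L[ℝ] ℝ | ∀ v ∈ S, g v < g u} := by
  simpa only [ofPred_forall] using hS.isOpen_biInter fun v _ =>
    isOpen_lt (continuous_eval_const v) (continuous_eval_const u)

theorem exists_forall_mem_extremePoints_sdiff_lt (hpX : IsPolyhedralSpace X) {u : X}
    (hu : u ∈ extremePoints ℝ (closedBall (0 : X) 1)) : ∃ φ : X →L[ℝ] ℝ,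
      ∀ v ∈ extremePoints ℝ (closedBall (0 : X) 1) \ {u}, φ v < φ u := by
  have hnot : u ∉ convexHull ℝ (extremePoints ℝ (closedBall (0 : X) 1) \ {u}) := fun h =>
    ((convex_closedBall 0 1).mem_extremePoints_iff_mem_sdiff_convexHull_sdiff.1 hu).2
      (convexHull_mono (sdiff_subset_sdiff_left extremePoints_subset) h)
  obtain ⟨φ, s, hφs, hsφ⟩ := geometric_hahn_banach_closed_point (convex_convexHull ℝ _)
    ((hpX.subset sdiff_subset).isClosed_convexHull (𝕜 := ℝ)) hnot
  exact ⟨φ, fun v hv => (hφs v (subset_convexHull ℝ _ hv)).trans hsφ⟩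

variable [FiniteDimensional ℝ X]

theorem opNorm_le_of_forall_mem_extremePoints (T : X →L[ℝ] Y) {c : ℝ} (hc : 0 ≤ c)
    (h : ∀ u ∈ extremePoints ℝ (closedBall (0 : X) 1), ‖T u‖ ≤ c) : ‖T‖ ≤ c := by
  have hball : closedBall (0 : X) 1 ⊆ T ⁻¹' closedBall 0 c := by
    rw [← closure_convexHull_extremePoints (isCompact_closedBall 0 1) (convex_closedBall 0 1)]
    refine closure_minimal (convexHull_min (fun u hu => by simpa using h u hu) ?_)
      (isClosed_closedBall.preimage T.continuous)
    exact (convex_closedBall 0 c).linear_preimage (T : X →ₗ[ℝ] Y)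
  exact T.opNorm_le_of_unit_norm hc fun x hx => by simpa using hball (by simp [hx])

theorem exists_mem_extremePoints_norm_apply_eq_opNorm (hpX : IsPolyhedralSpace X)
    (T : X →L[ℝ] Y) : ∃ u ∈ extremePoints ℝ (closedBall (0 : X) 1), ‖T u‖ = ‖T‖ := by
  obtain ⟨u, hu, hmax⟩ := exists_max_image _ (fun u => ‖T u‖) hpX
    ((isCompact_closedBall 0 1).extremePoints_nonempty (nonempty_closedBall.2 zero_le_one))
  refine ⟨u, hu, le_antisymm ?_ (opNorm_le_of_forall_mem_extremePoints T (norm_nonneg _) hmax)⟩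
  have hu1 : ‖u‖ ≤ 1 := by simpa using extremePoints_subset hu
  calc ‖T u‖ ≤ ‖T‖ * ‖u‖ := T.le_opNorm u
    _ ≤ ‖T‖ := mul_le_of_le_one_right (norm_nonneg _) hu1

theorem mem_suppFun_of_forall_mem_extremePoints_le {u : X} (hu : ‖u‖ = 1) {f : X →L[ℝ] ℝ}
    (hfu : f u = 1) (hf : ∀ v ∈ extremePoints ℝ (closedBall (0 : X) 1), f v ≤ 1) :
    f ∈ suppFun u := by
  have hle : ‖f‖ ≤ 1 := opNorm_le_of_forall_mem_extremePoints f zero_le_one fun v hv => by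
    have := hf (-v) (neg_mem_extremePoints_closedBall hv)
    rw [map_neg] at this
    exact abs_le.2 ⟨by linarith, hf v hv⟩
  refine ⟨le_antisymm hle ?_, by rw [hfu, hu]⟩
  calc (1 : ℝ) = ‖f u‖ := by rw [hfu, norm_one]
    _ ≤ ‖f‖ := by simpa [hu] using f.le_opNorm u

/-- The functionals exposing `u` form a nonempty open cone, which spans the dual and hence
contains a basis of it. -/
theorem exists_linearIndependent_mem_suppFun [Nontrivial X] (hpX : IsPolyhedralSpace X)
    {n : ℕ} (hX : finrank ℝ X = n) {u : X} (hu : u ∈ extremePoints ℝ (closedBall (0 : X) 1)) :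
    ∃ f : Fin n → X →L[ℝ] ℝ, LinearIndependent ℝ f ∧ ∀ i, f i ∈ suppFun u := by
  set E := extremePoints ℝ (closedBall (0 : X) 1)
  have hu1 : ‖u‖ = 1 := norm_eq_one_of_mem_extremePoints_closedBall hu
  set U := {g : X →L[ℝ] ℝ | ∀ v ∈ E \ {u}, g v < g u}
  have hU : IsOpen U := isOpen_setOf_forall_apply_lt (hpX.subset sdiff_subset) u
  obtain ⟨φ, hφ⟩ : U.Nonempty := exists_forall_mem_extremePoints_sdiff_lt hpX hu
  have hspan : Submodule.span ℝ U = ⊤ :=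
    Submodule.eq_top_of_nonempty_interior' _
      ⟨φ, interior_mono Submodule.subset_span (hU.interior_eq.symm ▸ hφ)⟩
  obtain ⟨g, hg, hgU⟩ :=
    exists_linearIndependent_fin_subset hspan.ge (finrank_continuousDual.trans hX)
  have hneg : -u ∈ E \ {u} := by
    refine ⟨neg_mem_extremePoints_closedBall hu, fun h => ?_⟩
    have hu0 : u ≠ 0 := norm_ne_zero_iff.1 (by rw [hu1]; exact one_ne_zero)
    rw [mem_singleton_iff, neg_eq_iff_add_eq_zero, ← two_smul ℝ, smul_eq_zero] at h
    exact hu0 (h.resolve_left two_ne_zero)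
  have hpos : ∀ i, 0 < g i u := fun i => by
    have := hgU i _ hneg
    rw [map_neg] at this
    linarith
  refine ⟨fun i => (g i u)⁻¹ • g i,
    hg.units_smul fun i => Units.mk0 _ (inv_ne_zero (hpos i).ne'), fun i => ?_⟩
  refine mem_suppFun_of_forall_mem_extremePoints_le hu1 (by simp [(hpos i).ne']) fun v hv => ?_
  rw [smul_apply, smul_eq_mul, inv_mul_le_one₀ (hpos i)]
  rcases eq_or_ne v u with rfl | hvu
  · exact le_rfl
  · exact (hgU i v ⟨hv, hvu⟩).le

end UnitBall

section Operator

variable {X Y : Type*} [NormedAddCommGroup X] [NormedSpace ℝ X]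
  [NormedAddCommGroup Y] [NormedSpace ℝ Y]

theorem bjOrth_of_mem_suppFun_s18 {u z : X} {f : X →L[ℝ] ℝ} (hf : f ∈ suppFun u) (hz : f z = 0) :
    BJOrth u z := fun t =>
  calc ‖u‖ = f (u + t • z) := by simp [hz, hf.2]
    _ ≤ ‖f‖ * ‖u + t • z‖ := (le_abs_self _).trans (f.le_opNorm _)
    _ = ‖u + t • z‖ := by rw [hf.1, one_mul]

theorem abs_apply_mul_norm_le_of_bjOrth (T : X →L[ℝ] Y) {f : X →L[ℝ] ℝ} {u : X} (hfu : f u = 1)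
    (horth : ∀ z, f z = 0 → BJOrth (T u) (T z)) (y : X) : |f y| * ‖T u‖ ≤ ‖T y‖ := by
  rcases eq_or_ne (f y) 0 with hy | hy
  · simp [hy]
  -- `y - f y • u` lies in `ker f`, and `T u + (f y)⁻¹ • T (y - f y • u) = (f y)⁻¹ • T y`.
  have h := horth (y - f y • u) (by simp [hfu]) (f y)⁻¹
  rw [map_sub, map_smul, smul_sub, smul_smul, inv_mul_cancel₀ hy, one_smul, add_sub_cancel,
    norm_smul, norm_inv, Real.norm_eq_abs] at h
  exact (le_inv_mul_iff₀ (abs_pos.2 hy)).1 h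

variable [FiniteDimensional ℝ X]

theorem image_mem_extremePoints_of_linearIndependent {n : ℕ} (hX : finrank ℝ X = n)
    {T : X →L[ℝ] X} (hT : Function.Injective T) {u : X} (hTu : ‖T u‖ ≤ 1)
    {f : Fin n → X →L[ℝ] ℝ} (hf : LinearIndependent ℝ f) (hfu : ∀ i, f i u = 1)
    (hfT : ∀ i y, f i y ≤ ‖T y‖) : T u ∈ extremePoints ℝ (closedBall (0 : X) 1) := by
  let e := LinearEquiv.ofInjectiveEndo (T : X →ₗ[ℝ] X) hT
  have hvertex : u ∈ extremePoints ℝ (e ⁻¹' closedBall 0 1) :=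
    mem_extremePoints_of_linearIndependent hX (by simpa [e] using hTu) hf fun i y hy => by
      simpa [hfu, e] using (hfT i y).trans (by simpa [e] using hy)
  have := image_extremePoints (𝕜 := ℝ) e (e ⁻¹' closedBall 0 1)
  rw [image_preimage_eq _ e.surjective] at this
  exact this ▸ mem_image_of_mem e hvertex

/-- `T` permutes the finitely many vertices, so `T⁻¹` is a contraction as well. -/
theorem norm_apply_eq_of_mapsTo_extremePoints (hpX : IsPolyhedralSpace X) {T : X →L[ℝ] X}
    (hT : ‖T‖ ≤ 1) (hinj : Function.Injective T)
    (hmaps : MapsTo T (extremePoints ℝ (closedBall (0 : X) 1))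
      (extremePoints ℝ (closedBall (0 : X) 1))) (x : X) : ‖T x‖ = ‖x‖ := by
  let e := (LinearEquiv.ofInjectiveEndo (T : X →ₗ[ℝ] X) hinj).toContinuousLinearEquiv
  have hperm : T '' extremePoints ℝ (closedBall (0 : X) 1) = extremePoints ℝ (closedBall 0 1) :=
    eq_of_subset_of_ncard_le hmaps.image_subset (ncard_image_of_injective _ hinj).ge hpX
  have hsymm : ‖(e.symm : X →L[ℝ] X)‖ ≤ 1 := by
    refine opNorm_le_of_forall_mem_extremePoints _ zero_le_one fun v hv => ?_
    obtain ⟨w, hw, rfl⟩ := hperm.symm ▸ hv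
    have : e.symm (T w) = w := e.symm_apply_apply w
    simpa [this] using extremePoints_subset hw
  refine le_antisymm ((T.le_opNorm x).trans (mul_le_of_le_one_left (norm_nonneg _) hT)) ?_
  calc ‖x‖ = ‖e.symm (T x)‖ := by rw [show e.symm (T x) = x from e.symm_apply_apply x]
    _ ≤ ‖T x‖ := ((e.symm : X →L[ℝ] X).le_opNorm _).trans
        (mul_le_of_le_one_left (norm_nonneg _) hsymm)

theorem norm_apply_eq_of_forall_extremePoints_linearIndependent (hpX : IsPolyhedralSpace X)
    {n : ℕ} (hX : finrank ℝ X = n) {T : X →L[ℝ] X} (hT : ‖T‖ ≤ 1)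
    (h : ∀ u ∈ extremePoints ℝ (closedBall (0 : X) 1), ∃ f : Fin n → X →L[ℝ] ℝ,
      LinearIndependent ℝ f ∧ (∀ i, f i u = 1) ∧ ∀ i y, |f i y| ≤ ‖T y‖) (x : X) :
    ‖T x‖ = ‖x‖ := by
  have hinj : Function.Injective T := by
    obtain ⟨u, hu⟩ :=
      (isCompact_closedBall (0 : X) 1).extremePoints_nonempty (nonempty_closedBall.2 zero_le_one)
    obtain ⟨f, hf, -, hfT⟩ := h u hu
    refine (injective_iff_map_eq_zero T).2 fun x hx =>
      eq_zero_of_linearIndependent_of_forall_apply_eq_zero_s18 hX hf fun i =>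
        abs_nonpos_iff.1 (by simpa [hx] using hfT i x)
  refine norm_apply_eq_of_mapsTo_extremePoints hpX hT hinj (fun u hu => ?_) x
  obtain ⟨f, hf, hfu, hfT⟩ := h u hu
  have hTu : ‖T u‖ ≤ 1 := (T.le_opNorm u).trans
    (mul_le_one₀ hT (norm_nonneg u) (by simpa using extremePoints_subset hu))
  exact image_mem_extremePoints_of_linearIndependent hX hinj hTu hf hfu
    fun i y => (le_abs_self _).trans (hfT i y)

end Operator

theorem stmt_18 {X : Type*} [NormedAddCommGroup X] [NormedSpace ℝ X] (n : ℕ)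
    (hX : Module.finrank ℝ X = n) [FiniteDimensional ℝ X]
    (hpX : IsPolyhedralSpace X)
    (T : X →L[ℝ] X) (hT : ‖T‖ = 1) :
    (∀ x : X, ‖T x‖ = ‖x‖) ↔
      ((∀ u ∈ Set.extremePoints ℝ (Metric.closedBall (0 : X) 1),
          ∀ v ∈ Set.extremePoints ℝ (Metric.closedBall (0 : X) 1), ‖T u‖ = ‖T v‖) ∧
       (∀ u ∈ Set.extremePoints ℝ (Metric.closedBall (0 : X) 1),
          ∃ f : Fin n → (X →L[ℝ] ℝ), LinearIndependent ℝ f ∧ (∀ i, f i ∈ suppFun u) ∧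
            ∀ i : Fin n, ∀ z : X, f i z = 0 → BJOrth (T u) (T z))) := by
  have : Nontrivial X := by
    by_contra h
    rw [not_nontrivial_iff_subsingleton] at h
    simp [Subsingleton.elim T 0] at hT
  have hnorm {u} (hu : u ∈ extremePoints ℝ (closedBall (0 : X) 1)) : ‖u‖ = 1 :=
    norm_eq_one_of_mem_extremePoints_closedBall hu
  constructor
  · intro hiso
    refine ⟨fun u hu v hv => by rw [hiso, hiso, hnorm hu, hnorm hv], fun u hu => ?_⟩
    obtain ⟨f, hf, hfu⟩ := exists_linearIndependent_mem_suppFun hpX hX hu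
    refine ⟨f, hf, hfu, fun i z hz t => ?_⟩
    rw [← map_smul, ← map_add, hiso, hiso]
    exact bjOrth_of_mem_suppFun_s18 (hfu i) hz t
  · rintro ⟨hconst, horth⟩
    obtain ⟨u₀, hu₀, hTu₀⟩ := exists_mem_extremePoints_norm_apply_eq_opNorm hpX T
    refine norm_apply_eq_of_forall_extremePoints_linearIndependent hpX hX hT.le fun u hu => ?_
    obtain ⟨f, hf, hfu, hfT⟩ := horth u hu
    have hfu1 (i) : f i u = 1 := (hfu i).2.trans (hnorm hu)
    refine ⟨f, hf, hfu1, fun i y => ?_⟩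
    simpa [hconst u hu u₀ hu₀, hTu₀, hT] using
      abs_apply_mul_norm_le_of_bjOrth T (hfu1 i) (hfT i) y
end

section
/- Let X = ℓ_p^2 with 1 < p < ∞, p ≠ 2, and let T : X → X be the linear operator T(x,y) = (x+y, x−y). Let u = (1,0) and v = (1,1)/‖(1,1)‖_p. Then T preserves Birkhoff-James orthogonality at u and at v (i.e., u ⊥_B w implies Tu ⊥_B Tw, and v ⊥_B w implies Tv ⊥_B Tw), but T is not a scalar multiple of a linear isometry of X. -/
/-!
If `x ⊥_B w` in `ℓ_p^n`, then `t ↦ ‖x + t w‖_p^p` is differentiable with a minimum at `0`, so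
`∑ |x_i|^(p-2) x_i w_i = 0`. For `x = u` this forces `w ∈ ℝ (0,1)`, and for `x = v` it forces
`w ∈ ℝ (1,-1)`. The images are then `T u = (1,1)` against a multiple of `(1,-1)`, and `T v` a
multiple of `(1,0)` against a multiple of `(0,1)`; in both cases a coordinate swap or sign flip
gives `‖x + t y‖ = ‖x - t y‖`, and the triangle inequality yields `‖x‖ ≤ ‖x + t y‖`.
On the other hand `T (1,0) = (1,1)` and `T (1,1) = 2 (1,0)`, so `T = cU` would force
`‖(1,1)‖_p² = 2`, i.e. `2^(2/p) = 2` and `p = 2`.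
-/

open Real

theorem BJOrth.of_forall_norm_add_smul_eq_norm_sub_smul {X : Type*} [NormedAddCommGroup X]
    [NormedSpace ℝ X] {x y : X} (h : ∀ t : ℝ, ‖x + t • y‖ = ‖x - t • y‖) : BJOrth x y := by
  intro t
  have hsum : (x + t • y) + (x - t • y) = (2 : ℝ) • x := by rw [two_smul]; abel
  have := norm_add_le (x + t • y) (x - t • y)
  rw [hsum, norm_smul, Real.norm_two, ← h t] at this
  linarith

theorem hasDerivAt_abs_add_mul_rpow {q : ℝ} (hq : 1 < q) (a b : ℝ) :
    HasDerivAt (fun t : ℝ => |a + t * b| ^ q) (q * |a| ^ (q - 2) * a * b) 0 := by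
  have hline : HasDerivAt (fun t : ℝ => a + t * b) b 0 := by
    simpa using ((hasDerivAt_id (0 : ℝ)).mul_const b).const_add a
  simpa [Function.comp_def, mul_assoc] using (hasDerivAt_abs_rpow (a + 0 * b) hq).comp 0 hline

namespace PiLp

variable {ι : Type*} [Fintype ι] {p : ENNReal}

theorem norm_rpow_eq_sum_abs_rpow (hp : 0 < p.toReal) (x : PiLp p (fun _ : ι => ℝ)) :
    ‖x‖ ^ p.toReal = ∑ i, |x i| ^ p.toReal := by
  rw [norm_eq_sum hp, ← rpow_mul (by positivity), one_div_mul_cancel hp.ne', rpow_one]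
  rfl

theorem norm_eq_norm_iff_sum_abs_rpow [Fact (1 ≤ p)] (hp : 0 < p.toReal)
    (x y : PiLp p (fun _ : ι => ℝ)) :
    ‖x‖ = ‖y‖ ↔ ∑ i, |x i| ^ p.toReal = ∑ i, |y i| ^ p.toReal := by
  rw [← norm_rpow_eq_sum_abs_rpow hp, ← norm_rpow_eq_sum_abs_rpow hp]
  exact (rpow_left_inj (norm_nonneg _) (norm_nonneg _) hp.ne').symm

end PiLp

theorem BJOrth.sum_abs_rpow_mul_eq_zero {ι : Type*} [Fintype ι] {p : ENNReal} [Fact (1 ≤ p)]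
    (hp : 1 < p) (hp' : p ≠ ⊤) {x w : PiLp p (fun _ : ι => ℝ)} (h : BJOrth x w) :
    ∑ i, |x i| ^ (p.toReal - 2) * x i * w i = 0 := by
  set q := p.toReal
  have hq : 1 < q := by simpa using (ENNReal.toReal_lt_toReal ENNReal.one_ne_top hp').2 hp
  have hderiv : HasDerivAt (fun t : ℝ => ∑ i, |x i + t * w i| ^ q)
      (∑ i, q * |x i| ^ (q - 2) * x i * w i) 0 :=
    HasDerivAt.fun_sum fun i _ => hasDerivAt_abs_add_mul_rpow hq (x i) (w i)
  have hmin : IsLocalMin (fun t : ℝ => ∑ i, |x i + t * w i| ^ q) 0 := by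
    refine Filter.Eventually.of_forall fun t => ?_
    have := rpow_le_rpow (norm_nonneg _) (h t) (by positivity : 0 ≤ q)
    rw [PiLp.norm_rpow_eq_sum_abs_rpow (by positivity),
      PiLp.norm_rpow_eq_sum_abs_rpow (by positivity)] at this
    simpa using this
  have := hmin.hasDerivAt_eq_zero hderiv
  simp only [mul_assoc, ← Finset.mul_sum] at this
  simpa [mul_assoc, (by positivity : q ≠ 0)] using this

section SumDiff

variable {p : ENNReal} [Fact (1 ≤ p)]
  {T : PiLp p (fun _ : Fin 2 => ℝ) →L[ℝ] PiLp p (fun _ : Fin 2 => ℝ)}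
  (hT : ∀ w : PiLp p (fun _ : Fin 2 => ℝ), T w 0 = w 0 + w 1 ∧ T w 1 = w 0 - w 1)
include hT

theorem bjOrth_map_of_bjOrth_axis (hp : 1 < p) (hp' : p ≠ ⊤)
    {u w : PiLp p (fun _ : Fin 2 => ℝ)} (hu : u 0 = 1 ∧ u 1 = 0) (h : BJOrth u w) :
    BJOrth (T u) (T w) := by
  have hw : w 0 = 0 := by
    simpa [Fin.sum_univ_two, hu.1, hu.2] using h.sum_abs_rpow_mul_eq_zero hp hp'
  refine BJOrth.of_forall_norm_add_smul_eq_norm_sub_smul fun t => ?_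
  rw [PiLp.norm_eq_norm_iff_sum_abs_rpow ((ENNReal.toReal_pos_iff_ne_top p).2 hp')]
  simp only [PiLp.add_apply, PiLp.sub_apply, PiLp.smul_apply, smul_eq_mul, Fin.sum_univ_two, hT,
    hu.1, hu.2, hw, add_zero, zero_add, sub_zero, zero_sub, mul_neg, sub_neg_eq_add]
  rw [← sub_eq_add_neg, add_comm]

theorem bjOrth_map_of_bjOrth_diagonal (hp : 1 < p) (hp' : p ≠ ⊤)
    {v w : PiLp p (fun _ : Fin 2 => ℝ)} (hv : v 0 = v 1) (hv0 : v 0 ≠ 0) (h : BJOrth v w) :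
    BJOrth (T v) (T w) := by
  have hw : w 0 + w 1 = 0 := by
    have := h.sum_abs_rpow_mul_eq_zero hp hp'
    rw [Fin.sum_univ_two, ← hv, ← mul_add] at this
    exact (mul_eq_zero.1 this).resolve_left
      (mul_ne_zero (rpow_pos_of_pos (abs_pos.2 hv0) _).ne' hv0)
  refine BJOrth.of_forall_norm_add_smul_eq_norm_sub_smul fun t => ?_
  rw [PiLp.norm_eq_norm_iff_sum_abs_rpow ((ENNReal.toReal_pos_iff_ne_top p).2 hp')]
  simp [Fin.sum_univ_two, hT, ← hv, hw]

theorem not_exists_eq_smul_linearIsometry (hp' : p ≠ ⊤) (hp2 : p ≠ 2)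
    {u e : PiLp p (fun _ : Fin 2 => ℝ)} (hu : u 0 = 1 ∧ u 1 = 0) (he : e 0 = 1 ∧ e 1 = 1) :
    ¬ ∃ (c : ℝ) (U : PiLp p (fun _ : Fin 2 => ℝ) →ₗᵢ[ℝ] PiLp p (fun _ : Fin 2 => ℝ)),
        ∀ w, T w = c • U w := by
  rintro ⟨c, U, hU⟩
  have hq : 0 < p.toReal := (ENNReal.toReal_pos_iff_ne_top p).2 hp'
  have hTu : T u = e := by
    ext i; fin_cases i <;> simp [hT, hu.1, hu.2, he.1, he.2]
  have hTe : T e = (2 : ℝ) • u := by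
    ext i; fin_cases i <;> norm_num [hT, hu.1, hu.2, he.1, he.2]
  have hnorm_u : ‖u‖ = 1 := by
    have := PiLp.norm_rpow_eq_sum_abs_rpow hq u
    simp only [Fin.sum_univ_two, hu.1, hu.2, abs_one, abs_zero, one_rpow, zero_rpow hq.ne',
      add_zero] at this
    rwa [← one_rpow p.toReal, rpow_left_inj (norm_nonneg _) zero_le_one hq.ne'] at this
  have hnorm_e : ‖e‖ ^ p.toReal = 2 := by
    simpa [Fin.sum_univ_two, he.1, he.2, one_add_one_eq_two] using
      PiLp.norm_rpow_eq_sum_abs_rpow hq e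
  have hnorm_T : ∀ w, ‖T w‖ = |c| * ‖w‖ := by simp [hU, norm_smul]
  have hsq : ‖e‖ ^ (2 : ℝ) = 2 := by
    have h1 := hnorm_T u
    have h2 := hnorm_T e
    rw [hTu, hnorm_u, mul_one] at h1
    rw [hTe, norm_smul, hnorm_u, ← h1] at h2
    rw [rpow_two, sq]
    simpa using h2.symm
  have he_pos : 0 < ‖e‖ := norm_pos_iff.2 fun h => by simp [h] at he
  have he_ne_one : ‖e‖ ≠ 1 := fun h => by norm_num [h] at hsq
  have : p.toReal = 2 := (rpow_right_inj he_pos he_ne_one).1 (hnorm_e.trans hsq.symm)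
  exact hp2 ((ENNReal.toReal_eq_toReal_iff' hp' (by simp)).1 (by simpa using this))

end SumDiff

theorem stmt_19 (p : ENNReal) (hp1 : 1 < p) [Fact (1 ≤ p)] (hptop : p ≠ ⊤) (hp2 : p ≠ 2)
    (T : PiLp p (fun _ : Fin 2 => ℝ) →L[ℝ] PiLp p (fun _ : Fin 2 => ℝ))
    (hT : ∀ w : PiLp p (fun _ : Fin 2 => ℝ),
      (T w) 0 = w 0 + w 1 ∧ (T w) 1 = w 0 - w 1)
    (u v : PiLp p (fun _ : Fin 2 => ℝ))
    (hu : u 0 = 1 ∧ u 1 = 0)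
    (e : PiLp p (fun _ : Fin 2 => ℝ)) (he : e 0 = 1 ∧ e 1 = 1)
    (hv : v = ‖e‖⁻¹ • e) :
    (∀ w, BJOrth u w → BJOrth (T u) (T w)) ∧
    (∀ w, BJOrth v w → BJOrth (T v) (T w)) ∧
    ¬ ∃ (c : ℝ) (U : PiLp p (fun _ : Fin 2 => ℝ) →ₗᵢ[ℝ] PiLp p (fun _ : Fin 2 => ℝ)),
        ∀ w, T w = c • U w := by
  have he_ne : e ≠ 0 := fun h => by simp [h] at he
  have hv0 : v 0 = ‖e‖⁻¹ := by simp [hv, he.1]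
  have hv1 : v 1 = ‖e‖⁻¹ := by simp [hv, he.2]
  refine ⟨fun w => bjOrth_map_of_bjOrth_axis hT hp1 hptop hu,
    fun w => bjOrth_map_of_bjOrth_diagonal hT hp1 hptop (hv0.trans hv1.symm) ?_,
    not_exists_eq_smul_linearIsometry hT hptop hp2 hu he⟩
  simpa [hv0] using he_ne
end
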